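/- arXiv:2507.11909 — 9 statements merged into one kernel-verified Lean document; each statement's English description precedes it below -/
import Mathlib

section
/- Let F and G be entering forests with V(G) ⊆ V(F), and let D ⊆ V(F) ∩ V(G). If no arc of F enters D from outside D (i.e., the incoming neighborhood N^in_D(F) is empty), then the graph F^G_{↑D} obtained from F by replacing the arcs emanating from vertices of D with the arcs emanating from those same vertices in G is again an entering forest. -/
open Finset

/-- The arc relation of a digraph given by its finite set of arcs. -/
def arcRel {V : Type*} (A : Finset (V × V)) : V → V → Prop := fun a b => (a, b) ∈ A

/-- Two vertices are connected if they are related by the equivalence closure of the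
arc relation (connectivity in the underlying undirected graph). -/
def Conn {V : Type*} (A : Finset (V × V)) : V → V → Prop := Relation.EqvGen (arcRel A)

/-- An entering forest on vertex set `S`: all arcs have both endpoints in `S`,
each vertex has at most one outgoing arc, and there are no directed cycles. -/
def IsEnteringForestOn {V : Type*} (S : Finset V) (A : Finset (V × V)) : Prop :=
  (∀ p ∈ A, p.1 ∈ S ∧ p.2 ∈ S) ∧
  (∀ v z z' : V, (v, z) ∈ A → (v, z') ∈ A → z = z') ∧
  (∀ v : V, ¬ Relation.TransGen (arcRel A) v v)

/-- `A` has exactly `k` connected components on the vertex set `S`. -/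
def HasKComponentsOn {V : Type*} (S : Finset V) (A : Finset (V × V)) (k : ℕ) : Prop :=
  ∃ reps : Finset V, reps ⊆ S ∧ reps.card = k ∧
    ∀ v ∈ S, ∃! w, w ∈ reps ∧ Conn A v w

/-- An entering tree on vertex set `D` with root `q`: every non-root vertex has exactly
one outgoing arc, the root has none, and every vertex reaches the root. -/
def IsRootedTreeOn {V : Type*} (D : Finset V) (q : V) (A : Finset (V × V)) : Prop :=
  q ∈ D ∧ (∀ p ∈ A, p.1 ∈ D ∧ p.2 ∈ D) ∧
  (∀ v ∈ D, v ≠ q → ∃! z, (v, z) ∈ A) ∧ (∀ z, (q, z) ∉ A) ∧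
  ∀ v ∈ D, Relation.ReflTransGen (arcRel A) v q

/-- replacing the arcs out of `D` in the entering forest `F` by the arcs
out of `D` in the entering forest `G` yields an entering forest, provided no arc of `F`
enters `D` from outside. -/
theorem stmt3 {V : Type*} [DecidableEq V] (SF SG : Finset V) (AF AG : Finset (V × V))
    (hF : IsEnteringForestOn SF AF) (hG : IsEnteringForestOn SG AG)
    (hVG : SG ⊆ SF) (D : Finset V) (hD : D ⊆ SF ∩ SG)
    (hin : ∀ p ∈ AF, p.2 ∈ D → p.1 ∈ D) :
    IsEnteringForestOn SF
      (AG.filter (fun p => p.1 ∈ D) ∪ AF.filter (fun p => p.1 ∉ D)) := by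
  obtain ⟨hFmem, hFfun, hFacyc⟩ := hF
  obtain ⟨hGmem, hGfun, hGacyc⟩ := hG
  set A' := AG.filter (fun p => p.1 ∈ D) ∪ AF.filter (fun p => p.1 ∉ D) with hA'
  have harc : ∀ a b : V, arcRel A' a b →
      (a ∈ D ∧ (a, b) ∈ AG) ∨ (a ∉ D ∧ (a, b) ∈ AF ∧ b ∉ D) := by
    intro a b hab
    simp only [arcRel, hA', Finset.mem_union, Finset.mem_filter] at hab
    rcases hab with ⟨h1, h2⟩ | ⟨h1, h2⟩
    · exact Or.inl ⟨h2, h1⟩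
    · refine Or.inr ⟨h2, h1, fun hb => h2 (hin (a, b) h1 hb)⟩
  -- outside D, everything is an F-walk staying outside D
  have hout : ∀ x y : V, Relation.TransGen (arcRel A') x y → x ∉ D →
      y ∉ D ∧ Relation.TransGen (arcRel AF) x y := by
    intro x y hxy
    induction hxy with
    | single h => intro hx
                  rcases harc _ _ h with ⟨h1, _⟩ | ⟨_, h2, h3⟩
                  · exact absurd h1 hx
                  · exact ⟨h3, Relation.TransGen.single h2⟩
    | tail h hstep ih =>
        intro hx
        obtain ⟨hb, hF⟩ := ih hx
        rcases harc _ _ hstep with ⟨h1, _⟩ | ⟨_, h2, h3⟩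
        · exact absurd h1 hb
        · exact ⟨h3, hF.tail h2⟩
  -- inside D, walks between D-vertices are G-walks
  have hinD : ∀ x y : V, Relation.TransGen (arcRel A') x y → x ∈ D → y ∈ D →
      Relation.TransGen (arcRel AG) x y := by
    intro x y hxy
    induction hxy using Relation.TransGen.head_induction_on with
    | single h => intro hx _
                  rcases harc _ _ h with ⟨_, h2⟩ | ⟨h1, _⟩
                  · exact Relation.TransGen.single h2
                  · exact absurd hx h1
    | @head a c hstep hrest ih =>
        intro hx hy
        rcases harc _ _ hstep with ⟨_, h2⟩ | ⟨h1, _⟩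
        · by_cases hc : c ∈ D
          · exact (Relation.TransGen.single (r := arcRel AG) h2).trans (ih hc hy)
          · exact absurd hy (hout _ _ hrest hc).1
        · exact absurd hx h1
  refine ⟨?_, ?_, ?_⟩
  · intro p hp
    simp only [hA', Finset.mem_union, Finset.mem_filter] at hp
    rcases hp with ⟨h1, _⟩ | ⟨h1, _⟩
    · exact ⟨hVG (hGmem p h1).1, hVG (hGmem p h1).2⟩
    · exact hFmem p h1
  · intro v z z' h1 h2
    simp only [hA', Finset.mem_union, Finset.mem_filter] at h1 h2
    rcases h1 with ⟨h1, hv⟩ | ⟨h1, hv⟩ <;> rcases h2 with ⟨h2, hv'⟩ | ⟨h2, hv'⟩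
    · exact hGfun v z z' h1 h2
    · exact absurd hv hv'
    · exact absurd hv' hv
    · exact hFfun v z z' h1 h2
  · intro v hv
    by_cases hvD : v ∈ D
    · exact hGacyc v (hinD v v hv hvD hvD)
    · exact hFacyc v (hout v v hv hvD).2
end

section
/- Let F and G be entering forests with V(G) ⊆ V(F), and let D ⊆ V(F) ∩ V(G). If no arc of G leaves D (i.e., the outgoing neighborhood N^out_D(G) is empty), then the graph F^G_{↑D} obtained from F by replacing the arcs emanating from vertices of D with the arcs emanating from those vertices in G is again an entering forest. -/
open Finset

/-- replacing the arcs out of `D` in the entering forest `F` by the arcs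
out of `D` in the entering forest `G` yields an entering forest, provided no arc of `G`
leaves `D`. -/
theorem stmt4 {V : Type*} [DecidableEq V] (SF SG : Finset V) (AF AG : Finset (V × V))
    (hF : IsEnteringForestOn SF AF) (hG : IsEnteringForestOn SG AG)
    (hVG : SG ⊆ SF) (D : Finset V) (hD : D ⊆ SF ∩ SG)
    (hout : ∀ p ∈ AG, p.1 ∈ D → p.2 ∈ D) :
    IsEnteringForestOn SF
      (AG.filter (fun p => p.1 ∈ D) ∪ AF.filter (fun p => p.1 ∉ D)) := by

  obtain ⟨hFv, hFfun, hFacy⟩ := hF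
  obtain ⟨hGv, hGfun, hGacy⟩ := hG
  set A' : Finset (V × V) := AG.filter (fun p => p.1 ∈ D) ∪ AF.filter (fun p => p.1 ∉ D) with hA'
  have mem_A' : ∀ p : V × V, p ∈ A' ↔ (p ∈ AG ∧ p.1 ∈ D) ∨ (p ∈ AF ∧ p.1 ∉ D) := by
    intro p; simp [hA', Finset.mem_union, Finset.mem_filter]
  -- Lemma: paths starting in D are G-paths staying in D
  have lem1 : ∀ a b, Relation.TransGen (arcRel A') a b → a ∈ D →
      Relation.TransGen (arcRel AG) a b ∧ b ∈ D := by
    intro a b h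
    induction h with
    | single harc =>
      intro ha
      rcases (mem_A' _).1 harc with ⟨hg, _⟩ | ⟨_, hn⟩
      · exact ⟨Relation.TransGen.single hg, hout _ hg ha⟩
      · exact absurd ha hn
    | tail hab harc ih =>
      intro ha
      obtain ⟨hp, hc⟩ := ih ha
      rcases (mem_A' _).1 harc with ⟨hg, _⟩ | ⟨_, hn⟩
      · exact ⟨hp.tail hg, hout _ hg hc⟩
      · exact absurd hc hn
  -- Lemma: a path is either an F-path or ends in D
  have lem2 : ∀ a b, Relation.TransGen (arcRel A') a b →
      Relation.TransGen (arcRel AF) a b ∨ b ∈ D := by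
    intro a b h
    induction h with
    | single harc =>
      rcases (mem_A' _).1 harc with ⟨hg, hd⟩ | ⟨hf, _⟩
      · exact Or.inr (hout _ hg hd)
      · exact Or.inl (Relation.TransGen.single hf)
    | tail hab harc ih =>
      rcases (mem_A' _).1 harc with ⟨hg, hd⟩ | ⟨hf, _⟩
      · exact Or.inr (hout _ hg hd)
      · rcases ih with hp | hd
        · exact Or.inl (hp.tail hf)
        · exact Or.inr ((lem1 _ _ (Relation.TransGen.single harc) hd).2)
  refine ⟨?_, ?_, ?_⟩
  · intro p hp
    rcases (mem_A' _).1 hp with ⟨hg, _⟩ | ⟨hf, _⟩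
    · exact ⟨hVG (hGv p hg).1, hVG (hGv p hg).2⟩
    · exact hFv p hf
  · intro v z z' h1 h2
    rcases (mem_A' _).1 h1 with ⟨hg1, hd1⟩ | ⟨hf1, hd1⟩ <;>
      rcases (mem_A' _).1 h2 with ⟨hg2, hd2⟩ | ⟨hf2, hd2⟩
    · exact hGfun v z z' hg1 hg2
    · exact absurd hd1 hd2
    · exact absurd hd2 hd1
    · exact hFfun v z z' hf1 hf2
  · intro v hv
    rcases lem2 _ _ hv with hp | hd
    · exact hFacy v hp
    · exact hGacy v (lem1 _ _ hv hd).1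
end

section
/- If an entering forest F on vertex set N has at most one arc emanating from each vertex, and F|_S is a tree whose vertex set S contains no root of F, then the outgoing restriction F|_{↑S} (the graph with all arcs of F emanating from vertices of S, with vertex set S together with the heads of those arcs) is a tree with exactly one vertex outside S, namely its root. -/
open Finset

/-- if `F|_S` is a tree and `S` contains no root of `F`, then the outgoing
restriction `F|_{↑S}` is a tree with exactly one vertex outside `S`, namely its root. -/
theorem stmt5 {V : Type*} [Fintype V] [DecidableEq V] (A : Finset (V × V)) (S : Finset V)
    (hF : IsEnteringForestOn (Finset.univ : Finset V) A)
    (htree : ∃ q, IsRootedTreeOn S q (A.filter (fun p => p.1 ∈ S ∧ p.2 ∈ S)))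
    (hnoroot : ∀ v ∈ S, ∃ z, (v, z) ∈ A) :
    ∃ r : V, (r ∈ S ∪ (A.filter (fun p => p.1 ∈ S)).image Prod.snd ∧ r ∉ S ∧
        IsRootedTreeOn (S ∪ (A.filter (fun p => p.1 ∈ S)).image Prod.snd) r
          (A.filter (fun p => p.1 ∈ S))) ∧
      ∀ r' : V, r' ∈ S ∪ (A.filter (fun p => p.1 ∈ S)).image Prod.snd → r' ∉ S → r' = r := by
  obtain ⟨q, hqS, hAf, huniq, hqno, hreach⟩ := htree
  obtain ⟨r, hqr⟩ := hnoroot q hqS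
  obtain ⟨-, hUniqA, -⟩ := hF
  have hrS : r ∉ S := by
    intro hrS
    exact hqno r (Finset.mem_filter.mpr ⟨hqr, hqS, hrS⟩)
  -- key: any arc of A leaving S (tail in S, head outside S) is (q, r)
  have key : ∀ v z : V, (v, z) ∈ A → v ∈ S → z ∉ S → v = q ∧ z = r := by
    intro v z hvz hvS hzS
    rcases eq_or_ne v q with rfl | hne
    · exact ⟨rfl, hUniqA v z r hvz hqr⟩
    · obtain ⟨z', hz', -⟩ := huniq v hvS hne
      have hz'A := Finset.mem_filter.mp hz'
      have := hUniqA v z z' hvz hz'A.1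
      exact absurd (this ▸ hz'A.2.2) hzS
  set B := A.filter (fun p => p.1 ∈ S) with hB
  set D := S ∪ B.image Prod.snd with hD
  have hqrB : (q, r) ∈ B := Finset.mem_filter.mpr ⟨hqr, hqS⟩
  have hrD : r ∈ D := Finset.mem_union_right _ (Finset.mem_image.mpr ⟨(q, r), hqrB, rfl⟩)
  -- any vertex of D outside S equals r
  have houtside : ∀ r' : V, r' ∈ D → r' ∉ S → r' = r := by
    intro r' hr'D hr'S
    rcases Finset.mem_union.mp hr'D with h | h
    · exact absurd h hr'S
    · obtain ⟨p, hp, rfl⟩ := Finset.mem_image.mp h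
      have hpB := Finset.mem_filter.mp hp
      exact (key p.1 p.2 hpB.1 hpB.2 hr'S).2
  refine ⟨r, ⟨hrD, hrS, hrD, ?_, ?_, ?_, ?_⟩, houtside⟩
  · intro p hp
    have hpB := Finset.mem_filter.mp hp
    exact ⟨Finset.mem_union_left _ hpB.2,
      Finset.mem_union_right _ (Finset.mem_image.mpr ⟨p, hp, rfl⟩)⟩
  · intro v hvD hvr
    have hvS : v ∈ S := by
      by_contra hvS
      exact hvr (houtside v hvD hvS)
    obtain ⟨z, hz⟩ := hnoroot v hvS
    refine ⟨z, Finset.mem_filter.mpr ⟨hz, hvS⟩, ?_⟩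
    intro z' hz'
    exact hUniqA v z' z (Finset.mem_filter.mp hz').1 hz
  · intro z hz
    exact hrS (Finset.mem_filter.mp hz).2
  · intro v hvD
    rcases Finset.mem_union.mp hvD with hvS | hv
    · -- v ∈ S reaches q within F|_S, whose arcs are arcs of B; then q → r
      have hvq : Relation.ReflTransGen (arcRel B) v q := by
        have := hreach v hvS
        refine Relation.ReflTransGen.mono ?_ _ _ this
        intro a b hab
        have := Finset.mem_filter.mp hab
        exact Finset.mem_filter.mpr ⟨this.1, this.2.1⟩
      exact hvq.trans (Relation.ReflTransGen.single hqrB)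
    · obtain ⟨p, hp, rfl⟩ := Finset.mem_image.mp hv
      have hpB := Finset.mem_filter.mp hp
      by_cases hS : p.2 ∈ S
      · have hvq : Relation.ReflTransGen (arcRel B) p.2 q := by
          refine Relation.ReflTransGen.mono ?_ _ _ (hreach p.2 hS)
          intro a b hab
          have := Finset.mem_filter.mp hab
          exact Finset.mem_filter.mpr ⟨this.1, this.2.1⟩
        exact hvq.trans (Relation.ReflTransGen.single hqrB)
      · rw [(key p.1 p.2 hpB.1 hpB.2 hS).2]
end

section
/- Let F be a spanning entering forest on N with k trees, tree-divisible by a partition ℵ. Then the splitting graph F^ℵ (with vertex set ℵ and an arc (X,Y) whenever F has an arc from X to Y) is an entering forest consisting of exactly k trees and has exactly |ℵ| − k arcs. -/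
open Finset

/-- `P` is a partition of `S` into nonempty sets. -/
def IsPartitionOn {V : Type*} (S : Finset V) (P : Finset (Finset V)) : Prop :=
  (∀ X ∈ P, X.Nonempty ∧ X ⊆ S) ∧ ∀ v ∈ S, ∃! X, X ∈ P ∧ v ∈ X

/-- Restriction of the arc set `A` to the vertex set `X`. -/
def restrict {V : Type*} [DecidableEq V] (A : Finset (V × V)) (X : Finset V) :
    Finset (V × V) :=
  A.filter (fun p => p.1 ∈ X ∧ p.2 ∈ X)

/-- A forest (arc set `A`) is tree-divisible by the partition `P` if the restriction to
each element of `P` is an entering tree. -/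
def TreeDivisible {V : Type*} [DecidableEq V] (A : Finset (V × V))
    (P : Finset (Finset V)) : Prop :=
  ∀ X ∈ P, ∃ q, IsRootedTreeOn X q (restrict A X)

/-- The splitting of a tree-divisible forest `A` by the partition `P`: an arc `(X, Y)`
for each arc of `A` with tail in `X` and head in `Y ≠ X`. -/
def splitArcsOf {V : Type*} [DecidableEq V] (A : Finset (V × V))
    (P : Finset (Finset V)) : Finset (Finset V × Finset V) :=
  (P ×ˢ P).filter (fun Q => Q.1 ≠ Q.2 ∧ ∃ p ∈ A, p.1 ∈ Q.1 ∧ p.2 ∈ Q.2)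

section
variable {V : Type*} [Fintype V] [DecidableEq V] {A : Finset (V × V)} {S : Finset V}

lemma wf_arc (hacyc : ∀ v : V, ¬ Relation.TransGen (arcRel A) v v) :
    WellFounded (fun b a : V => (a, b) ∈ A) := by
  have irr : ∀ v : V, ¬ Relation.TransGen (fun b a : V => (a, b) ∈ A) v v := by
    intro v hv
    refine hacyc v ?_
    have := Relation.TransGen.swap (r := fun b a : V => (a, b) ∈ A) v v hv
    exact this
  have ht : WellFounded (Relation.TransGen (fun b a : V => (a, b) ∈ A)) := by
    have : IsIrrefl V (Relation.TransGen fun b a => (a, b) ∈ A) := ⟨irr⟩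
    have : IsTrans V (Relation.TransGen fun b a => (a, b) ∈ A) := inferInstance
    exact Finite.wellFounded_of_trans_of_irrefl _
  exact Subrelation.wf (fun h => Relation.TransGen.single h) ht

set_option linter.unusedSectionVars false

lemma reach_root (hS : ∀ p ∈ A, p.1 ∈ S ∧ p.2 ∈ S)
    (hacyc : ∀ v : V, ¬ Relation.TransGen (arcRel A) v v) :
    ∀ v ∈ S, ∃ r ∈ S, (∀ z, (r, z) ∉ A) ∧ Relation.ReflTransGen (arcRel A) v r := by
  intro v hv
  induction v using (wf_arc hacyc).induction with
  | _ v ih =>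
    by_cases h : ∃ z, (v, z) ∈ A
    · obtain ⟨z, hz⟩ := h
      obtain ⟨r, hr, hno, hreach⟩ := ih z hz (hS _ hz).2
      exact ⟨r, hr, hno, Relation.ReflTransGen.head hz hreach⟩
    · push_neg at h
      exact ⟨v, hv, h, Relation.ReflTransGen.refl⟩

lemma root_unique (hfun : ∀ v z z' : V, (v, z) ∈ A → (v, z') ∈ A → z = z')
    {v r1 r2 : V} (h1 : Relation.ReflTransGen (arcRel A) v r1)
    (h2 : Relation.ReflTransGen (arcRel A) v r2)
    (hn1 : ∀ z, (r1, z) ∉ A) (hn2 : ∀ z, (r2, z) ∉ A) : r1 = r2 := by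
  induction h1 using Relation.ReflTransGen.head_induction_on with
  | refl =>
    rcases Relation.ReflTransGen.cases_head h2 with h | ⟨z, hz, _⟩
    · exact h
    · exact absurd hz (hn1 z)
  | head hvz _ ih =>
    rcases Relation.ReflTransGen.cases_head h2 with h | ⟨z', hz', h2'⟩
    · exact absurd hvz (h ▸ hn2 _)
    · exact ih (hfun _ _ _ hvz hz' ▸ h2')

lemma refltrans_conn {v w : V} (h : Relation.ReflTransGen (arcRel A) v w) :
    Conn A v w := by
  induction h with
  | refl => exact Relation.EqvGen.refl _
  | tail _ h2 ih => exact Relation.EqvGen.trans _ _ _ ih (Relation.EqvGen.rel _ _ h2)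

/-- Conn implies: endpoints are in S and any roots reachable from them coincide. -/
lemma conn_root_eq (hS : ∀ p ∈ A, p.1 ∈ S ∧ p.2 ∈ S)
    (hfun : ∀ v z z' : V, (v, z) ∈ A → (v, z') ∈ A → z = z')
    (hacyc : ∀ v : V, ¬ Relation.TransGen (arcRel A) v v)
    {v w : V} (h : Conn A v w) :
    v = w ∨ (v ∈ S ∧ w ∈ S ∧ ∀ r1 r2 : V, Relation.ReflTransGen (arcRel A) v r1 →
      Relation.ReflTransGen (arcRel A) w r2 →
      (∀ z, (r1, z) ∉ A) → (∀ z, (r2, z) ∉ A) → r1 = r2) := by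
  induction h with
  | rel a b hab =>
    right
    refine ⟨(hS _ hab).1, (hS _ hab).2, ?_⟩
    intro r1 r2 h1 h2 hn1 hn2
    exact root_unique hfun h1 (Relation.ReflTransGen.head hab h2) hn1 hn2
  | refl a => left; rfl
  | symm a b _ ih =>
    rcases ih with h | ⟨ha, hb, h⟩
    · left; exact h.symm
    · right; exact ⟨hb, ha, fun r1 r2 h1 h2 hn1 hn2 => (h r2 r1 h2 h1 hn2 hn1).symm⟩
  | trans a b c _ _ ih1 ih2 =>
    rcases ih1 with rfl | ⟨ha, hb, h1⟩
    · exact ih2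
    rcases ih2 with rfl | ⟨_, hc, h2⟩
    · right; exact ⟨ha, hb, h1⟩
    · right
      refine ⟨ha, hc, ?_⟩
      intro r1 r2 hra hrc hn1 hn2
      obtain ⟨rb, _, hnb, hreach⟩ := reach_root hS hacyc b hb
      rw [h1 r1 rb hra hreach hn1 hnb]
      exact h2 rb r2 hreach hrc hnb hn2

/-- Key counting lemma: an entering forest with k components on S has |S| - k arcs. -/
lemma forest_card_aux
    (hS : ∀ p ∈ A, p.1 ∈ S ∧ p.2 ∈ S)
    (hfun : ∀ v z z' : V, (v, z) ∈ A → (v, z') ∈ A → z = z')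
    (hacyc : ∀ v : V, ¬ Relation.TransGen (arcRel A) v v)
    {k : ℕ} (hk : ∃ reps : Finset V, reps ⊆ S ∧ reps.card = k ∧
      ∀ v ∈ S, ∃! w, w ∈ reps ∧ Conn A v w) :
    A.card + k = S.card := by
  classical
  obtain ⟨reps, hrS, hrk, hrep⟩ := hk
  set R : Finset V := S.filter (fun v => ∀ z, (v, z) ∉ A) with hR
  set T : Finset V := A.image Prod.fst with hT
  have hTS : T ⊆ S := by
    intro x hx
    simp only [hT, mem_image] at hx
    obtain ⟨p, hp, rfl⟩ := hx
    exact (hS p hp).1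
  have hAT : A.card = T.card := by
    rw [hT]
    refine (Finset.card_image_of_injOn ?_).symm
    intro p hp q hq hpq
    have := hfun p.1 p.2 q.2 hp (hpq ▸ hq)
    exact Prod.ext hpq this
  have hRT : R = S \ T := by
    ext v
    simp only [hR, hT, mem_filter, mem_sdiff, mem_image]
    constructor
    · rintro ⟨hv, hno⟩
      exact ⟨hv, by rintro ⟨p, hp, rfl⟩; exact hno p.2 (by simpa using hp)⟩
    · rintro ⟨hv, hno⟩
      refine ⟨hv, fun z hz => hno ⟨(v, z), hz, rfl⟩⟩
  have hcard : T.card + R.card = S.card := by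
    have := card_le_card hTS
    rw [hRT, card_sdiff_of_subset hTS]
    omega
  -- now show R.card = k
  have hRk : R.card = reps.card := by
    refine Finset.card_bij (fun r hr => Classical.choose (hrep r (mem_of_mem_filter r hr))) ?_ ?_ ?_
    · intro r hr
      exact (Classical.choose_spec (hrep r (mem_of_mem_filter r hr))).1.1
    · intro r1 hr1 r2 hr2 heq
      have s1 := (Classical.choose_spec (hrep r1 (mem_of_mem_filter r1 hr1))).1
      have s2 := (Classical.choose_spec (hrep r2 (mem_of_mem_filter r2 hr2))).1
      simp only at heq
      have hc : Conn A r1 r2 :=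
        Relation.EqvGen.trans _ _ _ s1.2 (Relation.EqvGen.symm _ _ (heq ▸ s2.2))
      rcases conn_root_eq hS hfun hacyc hc with h | ⟨_, _, h⟩
      · exact h
      · simp only [hR, mem_filter] at hr1 hr2
        exact h r1 r2 Relation.ReflTransGen.refl Relation.ReflTransGen.refl hr1.2 hr2.2
    · intro w hw
      obtain ⟨r, hrSmem, hno, hreach⟩ := reach_root hS hacyc w (hrS hw)
      have hrR : r ∈ R := by simp [hR, hrSmem, hno]
      refine ⟨r, hrR, ?_⟩
      have spec := Classical.choose_spec (hrep r (mem_of_mem_filter r hrR))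
      -- w is a rep connected to r
      exact (spec.2 w ⟨hw, Relation.EqvGen.symm _ _ (refltrans_conn hreach)⟩).symm
  omega

end

section Main
variable {V : Type*} [Fintype V] [DecidableEq V] (AF : Finset (V × V))
    (P : Finset (Finset V))
variable {AF P}

lemma mem_split {X Y : Finset V} :
    (X, Y) ∈ splitArcsOf AF P ↔
      X ∈ P ∧ Y ∈ P ∧ X ≠ Y ∧ ∃ p ∈ AF, p.1 ∈ X ∧ p.2 ∈ Y := by
  simp only [splitArcsOf, mem_filter, mem_product]
  tauto

lemma block_eq (hpart : IsPartitionOn (Finset.univ : Finset V) P)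
    {X Y : Finset V} {v : V} (hX : X ∈ P) (hvX : v ∈ X) (hY : Y ∈ P) (hvY : v ∈ Y) :
    X = Y := by
  obtain ⟨Z, _, hZu⟩ := hpart.2 v (mem_univ v)
  rw [hZu X ⟨hX, hvX⟩, hZu Y ⟨hY, hvY⟩]

lemma leave_root (hF : IsEnteringForestOn (Finset.univ : Finset V) AF)
    {X : Finset V} {q : V} (htree : IsRootedTreeOn X q (restrict AF X))
    {a b : V} (hab : (a, b) ∈ AF) (haX : a ∈ X) (hbX : b ∉ X) : a = q := by
  by_contra hne
  obtain ⟨z, hz, -⟩ := htree.2.2.1 a haX hne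
  simp only [_root_.restrict, mem_filter] at hz
  exact hbX (hF.2.1 a z b hz.1 hab ▸ hz.2.2)

lemma reach_root_AF {X : Finset V} {q : V} (htree : IsRootedTreeOn X q (restrict AF X))
    {v : V} (hv : v ∈ X) : Relation.ReflTransGen (arcRel AF) v q := by
  refine Relation.ReflTransGen.mono ?_ _ _ (htree.2.2.2.2 v hv)
  intro a b h
  exact (mem_filter.1 h).1

lemma conn_within (hdiv : TreeDivisible AF P) {X : Finset V} (hX : X ∈ P)
    {v w : V} (hv : v ∈ X) (hw : w ∈ X) : Conn AF v w := by
  obtain ⟨q, htree⟩ := hdiv X hX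
  exact Relation.EqvGen.trans _ _ _ (refltrans_conn (reach_root_AF htree hv))
    (Relation.EqvGen.symm _ _ (refltrans_conn (reach_root_AF htree hw)))

lemma notmem_of_ne_block (hpart : IsPartitionOn (Finset.univ : Finset V) P)
    {X Y : Finset V} (hX : X ∈ P) (hY : Y ∈ P) (hne : X ≠ Y) {b : V} (hb : b ∈ Y) :
    b ∉ X := fun hbX => hne (block_eq hpart hX hbX hY hb)

/-- From a split arc, every vertex of X strictly reaches some vertex of Y in AF. -/
lemma split_arc_reach (hpart : IsPartitionOn (Finset.univ : Finset V) P)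
    (hF : IsEnteringForestOn (Finset.univ : Finset V) AF) (hdiv : TreeDivisible AF P)
    {X Y : Finset V} (h : (X, Y) ∈ splitArcsOf AF P) :
    ∀ v ∈ X, ∃ w ∈ Y, Relation.TransGen (arcRel AF) v w := by
  obtain ⟨hX, hY, hne, ⟨a, b⟩, hab, haX, hbY⟩ := mem_split.1 h
  obtain ⟨q, htree⟩ := hdiv X hX
  have hbX : b ∉ X := notmem_of_ne_block hpart hX hY hne hbY
  have haq : a = q := leave_root hF htree hab haX hbX
  intro v hv
  exact ⟨b, hbY, Relation.TransGen.tail' (reach_root_AF htree hv) (haq ▸ hab)⟩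

lemma split_fun (hpart : IsPartitionOn (Finset.univ : Finset V) P)
    (hF : IsEnteringForestOn (Finset.univ : Finset V) AF) (hdiv : TreeDivisible AF P)
    {X Y Y' : Finset V} (h : (X, Y) ∈ splitArcsOf AF P)
    (h' : (X, Y') ∈ splitArcsOf AF P) : Y = Y' := by
  obtain ⟨hX, hY, hne, ⟨a, b⟩, hab, haX, hbY⟩ := mem_split.1 h
  obtain ⟨-, hY', hne', ⟨a', b'⟩, hab', haX', hbY'⟩ := mem_split.1 h'
  obtain ⟨q, htree⟩ := hdiv X hX
  have haq : a = q := leave_root hF htree hab haX (notmem_of_ne_block hpart hX hY hne hbY)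
  have haq' : a' = q :=
    leave_root hF htree hab' haX' (notmem_of_ne_block hpart hX hY' hne' hbY')
  have hbb : b = b' := hF.2.1 q b b' (haq ▸ hab) (haq' ▸ hab')
  exact block_eq hpart hY (hbb ▸ hbY) hY' hbY'

lemma split_reach (hpart : IsPartitionOn (Finset.univ : Finset V) P)
    (hF : IsEnteringForestOn (Finset.univ : Finset V) AF) (hdiv : TreeDivisible AF P)
    {X Y : Finset V} (h : Relation.TransGen (arcRel (splitArcsOf AF P)) X Y) :
    ∀ v ∈ X, ∃ w ∈ Y, Relation.TransGen (arcRel AF) v w := by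
  induction h with
  | single h => exact split_arc_reach hpart hF hdiv h
  | tail _ h2 ih =>
    intro v hv
    obtain ⟨w, hw, hvw⟩ := ih v hv
    obtain ⟨w', hw', hww'⟩ := split_arc_reach hpart hF hdiv h2 w hw
    exact ⟨w', hw', hvw.trans hww'⟩

lemma split_acyc (hpart : IsPartitionOn (Finset.univ : Finset V) P)
    (hF : IsEnteringForestOn (Finset.univ : Finset V) AF) (hdiv : TreeDivisible AF P)
    (X : Finset V) : ¬ Relation.TransGen (arcRel (splitArcsOf AF P)) X X := by
  intro h
  have hX : X ∈ P := by
    obtain ⟨Z, h1, -⟩ := Relation.TransGen.head'_iff.1 h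
    exact (mem_split.1 h1).1
  obtain ⟨q, htree⟩ := hdiv X hX
  obtain ⟨w, hw, hqw⟩ := split_reach hpart hF hdiv h q htree.1
  exact hF.2.2 q (hqw.trans_left (reach_root_AF htree hw))

/-- block of a vertex -/
noncomputable def blk (hpart : IsPartitionOn (Finset.univ : Finset V) P) (v : V) :
    Finset V :=
  Classical.choose (hpart.2 v (mem_univ v))

lemma blk_spec (hpart : IsPartitionOn (Finset.univ : Finset V) P) (v : V) :
    blk hpart v ∈ P ∧ v ∈ blk hpart v :=
  (Classical.choose_spec (hpart.2 v (mem_univ v))).1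

lemma blk_eq_of (hpart : IsPartitionOn (Finset.univ : Finset V) P) {v : V}
    {X : Finset V} (hX : X ∈ P) (hv : v ∈ X) : blk hpart v = X :=
  block_eq hpart (blk_spec hpart v).1 (blk_spec hpart v).2 hX hv

lemma conn_lift (hpart : IsPartitionOn (Finset.univ : Finset V) P) {v w : V}
    (h : Conn AF v w) : Conn (splitArcsOf AF P) (blk hpart v) (blk hpart w) := by
  induction h with
  | rel a b hab =>
    by_cases he : blk hpart a = blk hpart b
    · exact he ▸ Relation.EqvGen.refl _
    · refine Relation.EqvGen.rel _ _ (mem_split.2 ⟨(blk_spec hpart a).1,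
        (blk_spec hpart b).1, he, ⟨(a, b), hab, (blk_spec hpart a).2, (blk_spec hpart b).2⟩⟩)
  | refl a => exact Relation.EqvGen.refl _
  | symm a b _ ih => exact Relation.EqvGen.symm _ _ ih
  | trans a b c _ _ ih1 ih2 => exact Relation.EqvGen.trans _ _ _ ih1 ih2

lemma conn_descend (hpart : IsPartitionOn (Finset.univ : Finset V) P)
    (hdiv : TreeDivisible AF P) {X Y : Finset V}
    (h : Conn (splitArcsOf AF P) X Y) :
    X = Y ∨ ((∀ v ∈ X, ∀ w ∈ Y, Conn AF v w) ∧ X ∈ P ∧ Y ∈ P) := by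
  induction h with
  | rel X Y hXY =>
    obtain ⟨hX, hY, hne, ⟨a, b⟩, hab, haX, hbY⟩ := mem_split.1 hXY
    right
    refine ⟨?_, hX, hY⟩
    intro v hv w hw
    exact Relation.EqvGen.trans _ _ _ (conn_within hdiv hX hv haX)
      (Relation.EqvGen.trans _ _ _ (Relation.EqvGen.rel _ _ hab)
        (conn_within hdiv hY hbY hw))
  | refl X => left; rfl
  | symm X Y _ ih =>
    rcases ih with h | ⟨h, hX, hY⟩
    · left; exact h.symm
    · right; exact ⟨fun v hv w hw => Relation.EqvGen.symm _ _ (h w hw v hv), hY, hX⟩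
  | trans X Z Y _ _ ih1 ih2 =>
    rcases ih1 with rfl | ⟨h1, hX, hZ⟩
    · exact ih2
    rcases ih2 with rfl | ⟨h2, -, hY⟩
    · right; exact ⟨h1, hX, hZ⟩
    · right
      refine ⟨?_, hX, hY⟩
      obtain ⟨u, hu⟩ := (hpart.1 Z hZ).1
      exact fun v hv w hw =>
        Relation.EqvGen.trans _ _ _ (h1 v hv u hu) (h2 u hu w hw)

end Main

/-- the splitting `F^ℵ` of a `k`-component tree-divisible spanning entering
forest is an entering forest with `k` components and `|ℵ| - k` arcs (stated additively). -/
theorem stmt9 {V : Type*} [Fintype V] [DecidableEq V] (AF : Finset (V × V))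
    (P : Finset (Finset V)) (k : ℕ) (hpart : IsPartitionOn (Finset.univ : Finset V) P)
    (hF : IsEnteringForestOn (Finset.univ : Finset V) AF)
    (hk : HasKComponentsOn (Finset.univ : Finset V) AF k)
    (hdiv : TreeDivisible AF P) :
    IsEnteringForestOn P (splitArcsOf AF P) ∧
      HasKComponentsOn P (splitArcsOf AF P) k ∧
      (splitArcsOf AF P).card + k = P.card := by
  classical
  have hforest : IsEnteringForestOn P (splitArcsOf AF P) := by
    refine ⟨?_, ?_, split_acyc hpart hF hdiv⟩
    · intro p hp
      obtain ⟨h1, h2, -⟩ := mem_split.1 (show (p.1, p.2) ∈ splitArcsOf AF P from hp)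
      exact ⟨h1, h2⟩
    · intro X Y Y' h h'
      exact split_fun hpart hF hdiv h h'
  have hcomp : HasKComponentsOn P (splitArcsOf AF P) k := by
    obtain ⟨reps, hrS, hrk, hrep⟩ := hk
    have hinj : Set.InjOn (blk hpart) reps := by
      intro r1 hr1 r2 hr2 he
      have hc : Conn AF r1 r2 :=
        conn_within hdiv (blk_spec hpart r1).1 (blk_spec hpart r1).2
          (he ▸ (blk_spec hpart r2).2)
      obtain ⟨w, -, hu⟩ := hrep r1 (mem_univ r1)
      rw [hu r1 ⟨by simpa using hr1, Relation.EqvGen.refl _⟩,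
        hu r2 ⟨by simpa using hr2, hc⟩]
    refine ⟨reps.image (blk hpart), ?_, ?_, ?_⟩
    · intro W hW
      obtain ⟨r, -, rfl⟩ := mem_image.1 hW
      exact (blk_spec hpart r).1
    · rw [Finset.card_image_of_injOn hinj, hrk]
    · intro X hX
      obtain ⟨v, hv⟩ := (hpart.1 X hX).1
      have hXb : blk hpart v = X := blk_eq_of hpart hX hv
      obtain ⟨w, ⟨hwreps, hwconn⟩, hu⟩ := hrep v (mem_univ v)
      refine ⟨blk hpart w, ⟨mem_image_of_mem _ hwreps, ?_⟩, ?_⟩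
      · exact hXb ▸ conn_lift hpart hwconn
      · rintro W' ⟨hW', hconn'⟩
        obtain ⟨r', hr', rfl⟩ := mem_image.1 hW'
        have hvr' : Conn AF v r' := by
          rcases conn_descend hpart hdiv hconn' with rfl | ⟨h, -, -⟩
          · exact conn_within hdiv hX hv (blk_spec hpart r').2
          · exact h v hv r' (blk_spec hpart r').2
        rw [hu r' ⟨hr', hvr'⟩]
  refine ⟨hforest, hcomp, ?_⟩
  exact forest_card_aux hforest.1 hforest.2.1 hforest.2.2 hcomp
end

section
/- Let F be a spanning entering forest tree-divisible by a partition ℵ, and let X ∈ ℵ. Then at most one arc of F has its tail in X and head outside X, and if such an arc exists its head lies in a unique element Y of ℵ; consequently the splitting F^ℵ assigns to each X at most one outgoing arc. -/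
open Finset

/-- for a tree-divisible spanning entering forest, at most one arc leaves
each partition element `X`, its head lies in a unique `Y ∈ ℵ` distinct from `X`, and the
splitting assigns at most one outgoing arc to `X`. -/
theorem stmt10 {V : Type*} [Fintype V] [DecidableEq V] (AF : Finset (V × V))
    (P : Finset (Finset V)) (hpart : IsPartitionOn (Finset.univ : Finset V) P)
    (hF : IsEnteringForestOn (Finset.univ : Finset V) AF)
    (hdiv : TreeDivisible AF P) :
    ∀ X ∈ P,
      (∀ p ∈ AF, ∀ p' ∈ AF, p.1 ∈ X → p.2 ∉ X → p'.1 ∈ X → p'.2 ∉ X → p = p') ∧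
      (∀ p ∈ AF, p.1 ∈ X → p.2 ∉ X → ∃! Y, Y ∈ P ∧ Y ≠ X ∧ p.2 ∈ Y) ∧
      (∀ Q ∈ splitArcsOf AF P, ∀ Q' ∈ splitArcsOf AF P,
        Q.1 = X → Q'.1 = X → Q = Q') := by
  intro X hX
  obtain ⟨q, hq⟩ := hdiv X hX
  obtain ⟨hqX, harcs, huniq, hroot, hreach⟩ := hq
  obtain ⟨hcov, hfun, hacyc⟩ := hF
  -- key: any arc leaving X has tail q
  have key : ∀ p ∈ AF, p.1 ∈ X → p.2 ∉ X → p.1 = q := by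
    intro p hp h1 h2
    by_contra hne
    obtain ⟨z, hz, _⟩ := huniq p.1 h1 hne
    have hz' : (p.1, z) ∈ AF ∧ p.1 ∈ X ∧ z ∈ X := by
      simpa [_root_.restrict, Finset.mem_filter] using hz
    have := hfun p.1 p.2 z hp hz'.1
    exact h2 (this ▸ hz'.2.2)
  have part1 : ∀ p ∈ AF, ∀ p' ∈ AF, p.1 ∈ X → p.2 ∉ X → p'.1 ∈ X → p'.2 ∉ X → p = p' := by
    intro p hp p' hp' h1 h2 h1' h2'
    have e1 := key p hp h1 h2
    have e2 := key p' hp' h1' h2'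
    have e3 : p.1 = p'.1 := e1.trans e2.symm
    have e4 : p.2 = p'.2 := hfun p.1 p.2 p'.2 hp (e3 ▸ hp')
    exact Prod.ext e3 e4
  refine ⟨part1, ?_, ?_⟩
  · intro p hp h1 h2
    obtain ⟨Y, ⟨hYP, hpY⟩, hYu⟩ := hpart.2 p.2 (Finset.mem_univ _)
    refine ⟨Y, ⟨hYP, ?_, hpY⟩, ?_⟩
    · rintro rfl; exact h2 hpY
    · rintro Z ⟨hZP, _, hpZ⟩; exact hYu Z ⟨hZP, hpZ⟩
  · intro Q hQ Q' hQ' hQ1 hQ'1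
    simp only [splitArcsOf, Finset.mem_filter, Finset.mem_product] at hQ hQ'
    obtain ⟨⟨hQP1, hQP2⟩, hQne, p, hp, hp1, hp2⟩ := hQ
    obtain ⟨⟨hQ'P1, hQ'P2⟩, hQ'ne, p', hp', hp'1, hp'2⟩ := hQ'
    subst hQ1
    have hp2X : p.2 ∉ Q.1 := by
      intro h
      obtain ⟨Y, _, hYu⟩ := hpart.2 p.2 (Finset.mem_univ _)
      exact hQne ((hYu Q.1 ⟨hQP1, h⟩).trans (hYu Q.2 ⟨hQP2, hp2⟩).symm)
    have hp'1X : p'.1 ∈ Q.1 := hQ'1 ▸ hp'1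
    have hp'2X : p'.2 ∉ Q.1 := by
      intro h
      obtain ⟨Y, _, hYu⟩ := hpart.2 p'.2 (Finset.mem_univ _)
      exact hQ'ne (hQ'1 ▸ ((hYu Q'.1 ⟨hQ'P1, hQ'1 ▸ h⟩).trans (hYu Q'.2 ⟨hQ'P2, hp'2⟩).symm))
    have hpp : p = p' := part1 p hp p' hp' hp1 hp2X hp'1X hp'2X
    obtain ⟨Y, _, hYu⟩ := hpart.2 p.2 (Finset.mem_univ _)
    have : Q.2 = Q'.2 := (hYu Q.2 ⟨hQP2, hp2⟩).trans (hYu Q'.2 ⟨hQ'P2, hpp ▸ hp'2⟩).symm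
    exact Prod.ext hQ'1.symm this
end

section
/- Let Ψ be a weighted digraph tree-divisible by a partition ℵ, and let F be a spanning entering forest of Ψ with k trees that is tree-divisible by ℵ. Then F has a unique representative F′ in the set of k-component spanning entering forests of the splitting digraph Ψ|ℵ, i.e., a spanning forest F′ of Ψ|ℵ with arc set equal to the arc set of F^ℵ. -/
open Finset

/-- A digraph `AΨ` is tree-divisible by `P` if each `X ∈ P` carries an entering tree
made of arcs of `AΨ`. -/
def PsiDivisible {V : Type*} (AΨ : Finset (V × V)) (P : Finset (Finset V)) : Prop :=
  ∀ X ∈ P, ∃ q A', IsRootedTreeOn X q A' ∧ A' ⊆ AΨ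

/-- The arc set of the splitting digraph `Ψ|ℵ`: an arc `(X, Y)` whenever the set
`T_{XY}` (entering trees on `X` in `Ψ` together with one arc of `Ψ` from the root
into `Y`) is nonempty. -/
def psiSplitArcs {V : Type*} (AΨ : Finset (V × V)) (P : Finset (Finset V)) :
    Set (Finset V × Finset V) :=
  {Q | Q.1 ∈ P ∧ Q.2 ∈ P ∧ Q.1 ≠ Q.2 ∧
    ∃ q A', IsRootedTreeOn Q.1 q A' ∧ A' ⊆ AΨ ∧ ∃ r ∈ Q.2, (q, r) ∈ AΨ}

/-- Total weight of an arc set. -/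
def totW {V : Type*} (w : V → V → ℝ) (A : Finset (V × V)) : ℝ :=
  ∑ p ∈ A, w p.1 p.2

/-- Outgoing weight `Υ^A_D`: the sum of weights of arcs of `A` with tail in `D`. -/
def outW {V : Type*} [DecidableEq V] (w : V → V → ℝ) (A : Finset (V × V))
    (D : Finset V) : ℝ :=
  ∑ p ∈ A.filter (fun p => p.1 ∈ D), w p.1 p.2

/-- `λ^{•q}_X(A)`: minimal weight of an entering tree on `X` rooted at `q`, with arcs
from `A`. -/
noncomputable def lamRooted {V : Type*} (w : V → V → ℝ) (A : Finset (V × V))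
    (X : Finset V) (q : V) : ℝ :=
  sInf {t : ℝ | ∃ A', IsRootedTreeOn X q A' ∧ A' ⊆ A ∧ t = totW w A'}

/-- `λ^•_X(A)`: minimal weight of an entering tree on `X` with arcs from `A`. -/
noncomputable def lamB {V : Type*} (w : V → V → ℝ) (A : Finset (V × V))
    (X : Finset V) : ℝ :=
  sInf {t : ℝ | ∃ q A', IsRootedTreeOn X q A' ∧ A' ⊆ A ∧ t = totW w A'}

/-- `λ_{XY}(A)`: minimal weight of a tree of `T_{XY}`: an entering tree on `X` with arcs
from `A`, plus one arc of `A` from its root into `Y`. -/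
noncomputable def lamXY {V : Type*} (w : V → V → ℝ) (A : Finset (V × V))
    (X Y : Finset V) : ℝ :=
  sInf {t : ℝ | ∃ q A' r, IsRootedTreeOn X q A' ∧ A' ⊆ A ∧ r ∈ Y ∧ (q, r) ∈ A ∧
    t = totW w A' + w q r}


lemma rootedTree_root_eq {V : Type*} {X : Finset V} {q x : V} {A : Finset (V × V)}
    (hT : IsRootedTreeOn X q A) (hx : x ∈ X) (hout : ∀ z, (x, z) ∉ A) : x = q := by
  by_contra hne
  obtain ⟨z, hz, -⟩ := hT.2.2.1 x hx hne
  exact hout z hz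

lemma conn_of_rtg {V : Type*} {A B : Finset (V × V)} (hAB : A ⊆ B) {v q : V}
    (h : Relation.ReflTransGen (arcRel A) v q) : Relation.EqvGen (arcRel B) v q := by
  induction h with
  | refl => exact Relation.EqvGen.refl _
  | tail _ hstep ih =>
    exact Relation.EqvGen.trans _ _ _ ih (Relation.EqvGen.rel _ _ (hAB hstep))

/-- a tree-divisible `k`-component spanning entering forest `F` of `Ψ` has
a unique representative `F'` among the `k`-component spanning entering forests of the
splitting digraph `Ψ|ℵ`, namely the forest with arc set `A(F^ℵ)`. -/
theorem stmt11 {V : Type*} [Fintype V] [DecidableEq V] (AΨ : Finset (V × V))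
    (P : Finset (Finset V)) (k : ℕ) (hpart : IsPartitionOn (Finset.univ : Finset V) P)
    (hΨdiv : PsiDivisible AΨ P)
    (AF : Finset (V × V)) (hsub : AF ⊆ AΨ)
    (hF : IsEnteringForestOn (Finset.univ : Finset V) AF)
    (hk : HasKComponentsOn (Finset.univ : Finset V) AF k)
    (hdiv : TreeDivisible AF P) :
    ∃! F' : Finset (Finset V × Finset V),
      ↑F' ⊆ psiSplitArcs AΨ P ∧ IsEnteringForestOn P F' ∧
      HasKComponentsOn P F' k ∧ F' = splitArcsOf AF P := by
  classical
  obtain ⟨hPne, hPuniq⟩ := hpart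
  choose blk hblk huniq using fun v => hPuniq v (Finset.mem_univ v)
  have hfun := hF.2.1
  have hacyc := hF.2.2
  have hblockeq : ∀ {y : V} {X Y : Finset V}, X ∈ P → Y ∈ P → y ∈ X → y ∈ Y → X = Y := by
    intro y X Y hX hY h1 h2
    exact (huniq y X ⟨hX, h1⟩).trans (huniq y Y ⟨hY, h2⟩).symm
  choose rt hrt using hdiv
  set F' := splitArcsOf AF P with hF'def
  have hmemF' : ∀ {X Y : Finset V}, (X, Y) ∈ F' ↔
      X ∈ P ∧ Y ∈ P ∧ X ≠ Y ∧ ∃ p ∈ AF, p.1 ∈ X ∧ p.2 ∈ Y := by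
    intro X Y
    simp [hF'def, splitArcsOf, Finset.mem_filter, Finset.mem_product, and_assoc]
  have hroot : ∀ {X : Finset V} {x y : V} (hX : X ∈ P), (x, y) ∈ AF → x ∈ X → y ∉ X →
      x = rt X hX := by
    intro X x y hX hxy hx hyX
    refine rootedTree_root_eq (hrt X hX) hx ?_
    intro z hz
    have hzm := Finset.mem_filter.1 hz
    have hzy : z = y := hfun x z y hzm.1 hxy
    exact hyX (hzy ▸ hzm.2.2)
  have harc : ∀ {X Y : Finset V}, (X, Y) ∈ F' → ∃ (hX : X ∈ P) (hY : Y ∈ P) (x y : V),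
      (x, y) ∈ AF ∧ x ∈ X ∧ y ∈ Y ∧ y ∉ X ∧ x = rt X hX := by
    intro X Y h
    obtain ⟨hX, hY, hne, ⟨x, y⟩, hxy, hx, hy⟩ := hmemF'.1 h
    have hyX : y ∉ X := fun h' => hne (hblockeq hX hY h' hy)
    exact ⟨hX, hY, x, y, hxy, hx, hy, hyX, hroot hX hxy hx hyX⟩
  -- subset of psiSplitArcs
  have hsubΨ : ↑F' ⊆ psiSplitArcs AΨ P := by
    intro Q hQ
    obtain ⟨X, Y⟩ := Q
    obtain ⟨hX, hY, x, y, hxy, hx, hy, hyX, hxr⟩ := harc hQ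
    have hne : X ≠ Y := (hmemF'.1 hQ).2.2.1
    refine ⟨hX, hY, hne, rt X hX, restrict AF X, hrt X hX,
      (Finset.filter_subset _ _).trans hsub, y, hy, hsub (hxr ▸ hxy)⟩
  -- forest structure on F'
  have hfun' : ∀ X Y Z : Finset V, (X, Y) ∈ F' → (X, Z) ∈ F' → Y = Z := by
    intro X Y Z h1 h2
    obtain ⟨hX, hY, x, y, hxy, hx, hy, hyX, hxr⟩ := harc h1
    obtain ⟨hX', hZ, x', y', hxy', hx', hy', hyX', hxr'⟩ := harc h2
    have hxx : x = x' := by rw [hxr, hxr']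
    have hyy : y = y' := hfun x y y' hxy (hxx ▸ hxy')
    exact hblockeq hY hZ hy (hyy ▸ hy')
  have hstep : ∀ {X Y : Finset V} (hX : X ∈ P) (hY : Y ∈ P), (X, Y) ∈ F' →
      Relation.TransGen (arcRel AF) (rt X hX) (rt Y hY) := by
    intro X Y hX hY hXY
    obtain ⟨hX', hY', x, y, hxy, hx, hy, hyX, hxr⟩ := harc hXY
    have h1 : arcRel AF (rt X hX) y := hxr ▸ hxy
    have h2 : Relation.ReflTransGen (arcRel AF) y (rt Y hY) := by
      refine Relation.ReflTransGen.mono ?_ _ _ ((hrt Y hY).2.2.2.2 y hy)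
      intro a b h
      exact Finset.mem_filter.1 h |>.1
    exact Relation.TransGen.head' h1 h2
  have hkey : ∀ {X Y : Finset V}, Relation.TransGen (arcRel F') X Y →
      ∃ (hX : X ∈ P) (hY : Y ∈ P), Relation.TransGen (arcRel AF) (rt X hX) (rt Y hY) := by
    intro X Y h
    induction h with
    | single h =>
      obtain ⟨hX, hY, -⟩ := harc h
      exact ⟨hX, hY, hstep hX hY h⟩
    | tail h1 h2 ih =>
      obtain ⟨hX, hZ, t1⟩ := ih
      obtain ⟨hZ', hY, -⟩ := harc h2
      exact ⟨hX, hY, t1.trans (hstep hZ' hY h2)⟩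
  have hforest' : IsEnteringForestOn P F' := by
    refine ⟨?_, ?_, ?_⟩
    · intro p hp
      obtain ⟨X, Y⟩ := p
      obtain ⟨hX, hY, -⟩ := hmemF'.1 hp
      exact ⟨hX, hY⟩
    · exact hfun'
    · intro X hcy
      obtain ⟨hX, hX2, t⟩ := hkey hcy
      exact hacyc (rt X hX) t
  -- connectivity
  have hintra : ∀ {X : Finset V}, X ∈ P → ∀ {v w : V}, v ∈ X → w ∈ X → Conn AF v w := by
    intro X hX v w hv hw
    have h1 := conn_of_rtg (Finset.filter_subset _ _) ((hrt X hX).2.2.2.2 v hv)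
    have h2 := conn_of_rtg (Finset.filter_subset _ _) ((hrt X hX).2.2.2.2 w hw)
    exact Relation.EqvGen.trans _ _ _ h1 (Relation.EqvGen.symm _ _ h2)
  have hlift : ∀ {v w : V}, Conn AF v w → Conn F' (blk v) (blk w) := by
    intro v w h
    induction h with
    | rel a b hab =>
      by_cases heq : blk a = blk b
      · rw [heq]; exact Relation.EqvGen.refl _
      · exact Relation.EqvGen.rel _ _
          (hmemF'.2 ⟨(hblk a).1, (hblk b).1, heq, (a, b), hab, (hblk a).2, (hblk b).2⟩)
    | refl a => exact Relation.EqvGen.refl _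
    | symm a b _ ih => exact Relation.EqvGen.symm _ _ ih
    | trans a b c _ _ ih1 ih2 => exact Relation.EqvGen.trans _ _ _ ih1 ih2
  have hdesc : ∀ {X Y : Finset V}, Conn F' X Y →
      X = Y ∨ (X ∈ P ∧ Y ∈ P ∧ ∀ v ∈ X, ∀ w ∈ Y, Conn AF v w) := by
    intro X Y h
    induction h with
    | rel X Y hXY =>
      obtain ⟨hX, hY, x, y, hxy, hx, hy, -, -⟩ := harc hXY
      refine Or.inr ⟨hX, hY, fun v hv w hw => ?_⟩
      exact Relation.EqvGen.trans _ _ _ (hintra hX hv hx)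
        (Relation.EqvGen.trans _ _ _ (Relation.EqvGen.rel _ _ hxy) (hintra hY hy hw))
    | refl X => exact Or.inl rfl
    | symm X Y _ ih =>
      rcases ih with heq | ⟨hX, hY, hg⟩
      · exact Or.inl heq.symm
      · exact Or.inr ⟨hY, hX, fun v hv w hw => Relation.EqvGen.symm _ _ (hg w hw v hv)⟩
    | trans X Z Y _ _ ih1 ih2 =>
      rcases ih1 with heq | ⟨hX, hZ, hg1⟩
      · rw [heq]; exact ih2
      rcases ih2 with heq | ⟨hZ', hY, hg2⟩
      · rw [← heq]; exact Or.inr ⟨hX, hZ, hg1⟩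
      obtain ⟨z, hz⟩ := (hPne Z hZ).1
      exact Or.inr ⟨hX, hY, fun v hv w hw =>
        Relation.EqvGen.trans _ _ _ (hg1 v hv z hz) (hg2 z hz w hw)⟩
  obtain ⟨reps, hrepsub, hrepcard, hrepuniq⟩ := hk
  have hinj : Set.InjOn blk ↑reps := by
    intro r hr r' hr' heq
    have hc : Conn AF r r' := hintra (hblk r).1 (hblk r).2 (heq ▸ (hblk r').2)
    obtain ⟨w, hw, hu⟩ := hrepuniq r (Finset.mem_univ r)
    have e1 := hu r ⟨hr, Relation.EqvGen.refl r⟩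
    have e2 := hu r' ⟨hr', hc⟩
    exact e1.trans e2.symm
  have hcomp : HasKComponentsOn P F' k := by
    refine ⟨reps.image blk, ?_, ?_, ?_⟩
    · intro W hW
      obtain ⟨r, hr, hWr⟩ := Finset.mem_image.1 hW
      exact hWr ▸ (hblk r).1
    · rw [Finset.card_image_of_injOn hinj, hrepcard]
    · intro X hX
      obtain ⟨v, hv⟩ := (hPne X hX).1
      obtain ⟨r, ⟨hrreps, hconn⟩, hu⟩ := hrepuniq v (Finset.mem_univ v)
      have hXblk : X = blk v := huniq v X ⟨hX, hv⟩
      refine ⟨blk r, ⟨Finset.mem_image_of_mem blk hrreps, hXblk ▸ hlift hconn⟩, ?_⟩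
      rintro W ⟨hW, hWconn⟩
      obtain ⟨r', hr', hWr'⟩ := Finset.mem_image.1 hW
      have hcvr : Conn AF v r' := by
        rcases hdesc hWconn with heq | ⟨-, -, hg⟩
        · have hr'W : r' ∈ X := by rw [heq, ← hWr']; exact (hblk r').2
          exact hintra hX hv hr'W
        · exact hg v hv r' (hWr' ▸ (hblk r').2)
      have : r' = r := hu r' ⟨hr', hcvr⟩
      rw [← hWr', this]
  exact ⟨F', ⟨hsubΨ, hforest', hcomp, rfl⟩, fun G hG => hG.2.2.2⟩
end

section
/- Every k-component spanning entering forest F′ of the splitting digraph Ψ|ℵ has at least one principal: a k-component spanning entering forest F of Ψ, tree-divisible by ℵ, whose splitting F^ℵ has the same arc set as F′. -/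
open Finset

private lemma rtg_eqvGen {α : Type*} {r : α → α → Prop} {a b : α}
    (h : Relation.ReflTransGen r a b) : Relation.EqvGen r a b := by
  induction h with
  | refl => exact Relation.EqvGen.refl a
  | tail _ h2 ih => exact Relation.EqvGen.trans _ _ _ ih (Relation.EqvGen.rel _ _ h2)

private lemma func_no_cycle {α : Type*} {r : α → α → Prop} {q : α}
    (hq : ∀ z, ¬ r q z) (hfun : ∀ a b c, r a b → r a c → b = c) :
    ∀ v, Relation.ReflTransGen r v q → ¬ Relation.TransGen r v v := by
  intro v hvq
  induction hvq using Relation.ReflTransGen.head_induction_on with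
  | refl =>
    intro hcyc
    obtain ⟨c, hqc, -⟩ := Relation.TransGen.head'_iff.mp hcyc
    exact hq c hqc
  | head h' h ih =>
    intro hcyc
    obtain ⟨d, had, hda⟩ := Relation.TransGen.head'_iff.mp hcyc
    have hdc : d = _ := hfun _ _ _ had h'
    subst hdc
    exact ih (Relation.TransGen.tail' hda had)

/-- every `k`-component spanning entering forest `F'` of the splitting
digraph `Ψ|ℵ` has at least one principal: a tree-divisible `k`-component spanning
entering forest of `Ψ` whose splitting has the same arc set as `F'`. -/
theorem stmt12 {V : Type*} [Fintype V] [DecidableEq V] (AΨ : Finset (V × V))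
    (P : Finset (Finset V)) (k : ℕ) (hpart : IsPartitionOn (Finset.univ : Finset V) P)
    (hΨdiv : PsiDivisible AΨ P)
    (F' : Finset (Finset V × Finset V)) (hF'sub : ↑F' ⊆ psiSplitArcs AΨ P)
    (hF' : IsEnteringForestOn P F') (hF'k : HasKComponentsOn P F' k) :
    ∃ AF : Finset (V × V), AF ⊆ AΨ ∧
      IsEnteringForestOn (Finset.univ : Finset V) AF ∧
      HasKComponentsOn (Finset.univ : Finset V) AF k ∧
      TreeDivisible AF P ∧ splitArcsOf AF P = F' := by
  classical
  obtain ⟨hPne, hPuniq⟩ := hpart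
  have hcls0 : ∀ v : V, ∃ X, X ∈ P ∧ v ∈ X := fun v => (hPuniq v (mem_univ v)).exists
  choose cls hclsP hclsmem using hcls0
  have huni : ∀ (v : V) (X : Finset V), X ∈ P → v ∈ X → X = cls v := by
    intro v X hX hvX
    obtain ⟨W, _, hWu⟩ := hPuniq v (mem_univ v)
    rw [hWu X ⟨hX, hvX⟩, hWu (cls v) ⟨hclsP v, hclsmem v⟩]
  have hF'P : ∀ X Y, (X, Y) ∈ F' → X ∈ P ∧ Y ∈ P ∧ X ≠ Y := by
    intro X Y h
    have h2 := hF'sub (Finset.mem_coe.mpr h)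
    exact ⟨h2.1, h2.2.1, h2.2.2.1⟩
  obtain ⟨-, hF'fun, hF'acyc⟩ := hF'
  -- main choice of trees and crossing arcs
  have hmain : ∀ X, X ∈ P → ∃ (q : V) (A' C : Finset (V × V)),
      IsRootedTreeOn X q A' ∧ A' ⊆ AΨ ∧ C ⊆ AΨ ∧
      (∀ p ∈ C, p.1 = q ∧ ∃ Y, (X, Y) ∈ F' ∧ p.2 ∈ Y) ∧
      (∀ p ∈ C, ∀ p' ∈ C, p = p') ∧
      (∀ Y, (X, Y) ∈ F' → ∃ p ∈ C, p.2 ∈ Y) := by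
    intro X hX
    by_cases h : ∃ Y, (X, Y) ∈ F'
    · obtain ⟨Y, hXY⟩ := h
      obtain ⟨-, -, -, q, A', htr, hsub, r, hrY, hqr⟩ := hF'sub (Finset.mem_coe.mpr hXY)
      refine ⟨q, A', {(q, r)}, htr, hsub, Finset.singleton_subset_iff.mpr hqr, ?_, ?_, ?_⟩
      · intro p hp
        rw [Finset.mem_singleton] at hp
        subst hp
        exact ⟨rfl, Y, hXY, hrY⟩
      · intro p hp p' hp'
        rw [Finset.mem_singleton] at hp hp'
        rw [hp, hp']
      · intro Y' hXY'
        have : Y' = Y := hF'fun X Y' Y hXY' hXY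
        subst this
        exact ⟨(q, r), Finset.mem_singleton_self _, hrY⟩
    · obtain ⟨q, A', htr, hsub⟩ := hΨdiv X hX
      exact ⟨q, A', ∅, htr, hsub, Finset.empty_subset _,
        fun p hp => absurd hp (Finset.notMem_empty p),
        fun p hp => absurd hp (Finset.notMem_empty p),
        fun Y hXY => absurd ⟨Y, hXY⟩ h⟩
  choose qf Af Cf htree hAsub hCsub hCarc0 hCuniq0 hCex0 using hmain
  -- proof-free versions
  set T : Finset V → Finset (V × V) := fun X => if h : X ∈ P then Af X h else ∅ with hTdef0
  set Cr : Finset V → Finset (V × V) := fun X => if h : X ∈ P then Cf X h else ∅ with hCdef0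
  have hTdef : ∀ {X : Finset V} (hX : X ∈ P), T X = Af X hX := fun {X} hX => dif_pos hX
  have hCdef : ∀ {X : Finset V} (hX : X ∈ P), Cr X = Cf X hX := fun {X} hX => dif_pos hX
  have hTtree : ∀ X (hX : X ∈ P), IsRootedTreeOn X (qf X hX) (T X) := by
    intro X hX; rw [hTdef hX]; exact htree X hX
  have hqmem : ∀ X (hX : X ∈ P), qf X hX ∈ X := fun X hX => (hTtree X hX).1
  have hTin : ∀ X (hX : X ∈ P), ∀ p ∈ T X, p.1 ∈ X ∧ p.2 ∈ X :=
    fun X hX => (hTtree X hX).2.1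
  have hCarc : ∀ X (hX : X ∈ P), ∀ p ∈ Cr X, p.1 = qf X hX ∧ ∃ Y, (X, Y) ∈ F' ∧ p.2 ∈ Y := by
    intro X hX; rw [hCdef hX]; exact hCarc0 X hX
  have hCuniq : ∀ X (hX : X ∈ P), ∀ p ∈ Cr X, ∀ p' ∈ Cr X, p = p' := by
    intro X hX; rw [hCdef hX]; exact hCuniq0 X hX
  have hCex : ∀ X (hX : X ∈ P), ∀ Y, (X, Y) ∈ F' → ∃ p ∈ Cr X, p.2 ∈ Y := by
    intro X hX; rw [hCdef hX]; exact hCex0 X hX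
  -- the forest
  set AF : Finset (V × V) := P.biUnion (fun X => T X ∪ Cr X) with hAFdef
  have hmemAF : ∀ p : V × V, p ∈ AF ↔ ∃ X, X ∈ P ∧ (p ∈ T X ∨ p ∈ Cr X) := by
    intro p
    simp only [hAFdef, Finset.mem_biUnion, Finset.mem_union]
  have hTAF : ∀ X, X ∈ P → T X ⊆ AF := by
    intro X hX p hp
    exact (hmemAF p).mpr ⟨X, hX, Or.inl hp⟩
  have hCAF : ∀ X, X ∈ P → Cr X ⊆ AF := by
    intro X hX p hp
    exact (hmemAF p).mpr ⟨X, hX, Or.inr hp⟩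
  -- classification of arcs
  have harc : ∀ p ∈ AF, (p ∈ T (cls p.1) ∧ cls p.2 = cls p.1) ∨ (cls p.1, cls p.2) ∈ F' := by
    intro p hp
    obtain ⟨X, hX, hp | hp⟩ := (hmemAF p).mp hp
    · obtain ⟨h1, h2⟩ := hTin X hX p hp
      have e : X = cls p.1 := huni _ _ hX h1
      subst e
      exact Or.inl ⟨hp, (huni _ _ hX h2).symm⟩
    · obtain ⟨hpq, Y, hXY, hpY⟩ := hCarc X hX p hp
      have hX1 : p.1 ∈ X := by rw [hpq]; exact hqmem X hX
      have e1 : X = cls p.1 := huni _ _ hX hX1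
      have e2 : Y = cls p.2 := huni _ _ (hF'P _ _ hXY).2.1 hpY
      right
      rw [← e1, ← e2]
      exact hXY
  -- tree acyclicity
  have hTfun : ∀ X (hX : X ∈ P), ∀ a b c, arcRel (T X) a b → arcRel (T X) a c → b = c := by
    intro X hX a b c h1 h2
    have haX : a ∈ X := (hTin X hX _ h1).1
    by_cases hqc : a = qf X hX
    · exact absurd (show (qf X hX, b) ∈ T X by rw [← hqc]; exact h1)
        ((hTtree X hX).2.2.2.1 b)
    · obtain ⟨z, -, hzu⟩ := (hTtree X hX).2.2.1 a haX hqc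
      rw [hzu b h1, hzu c h2]
  have hTacyc : ∀ X, X ∈ P → ∀ v, ¬ Relation.TransGen (arcRel (T X)) v v := by
    intro X hX v hcyc
    obtain ⟨c, hvc, -⟩ := Relation.TransGen.head'_iff.mp hcyc
    have hvX : v ∈ X := (hTin X hX _ hvc).1
    exact func_no_cycle ((hTtree X hX).2.2.2.1) (hTfun X hX) v
      ((hTtree X hX).2.2.2.2 v hvX) hcyc
  -- projection of paths
  have hproj : ∀ v w, Relation.TransGen (arcRel AF) v w →
      Relation.TransGen (arcRel F') (cls v) (cls w) ∨
      (cls v = cls w ∧ Relation.TransGen (arcRel (T (cls v))) v w) := by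
    intro v w h
    induction h with
    | single hb =>
      rcases harc _ hb with ⟨hA, h2⟩ | hf
      · exact Or.inr ⟨h2.symm, Relation.TransGen.single hA⟩
      · exact Or.inl (Relation.TransGen.single hf)
    | tail hvb hbc ih =>
      rcases harc _ hbc with ⟨hA, h2⟩ | hf
      · rcases ih with hl | ⟨e, ht⟩
        · left; rwa [h2]
        · right
          refine ⟨e.trans h2.symm, Relation.TransGen.tail ht ?_⟩
          rw [e]; exact hA
      · rcases ih with hl | ⟨e, ht⟩
        · exact Or.inl (Relation.TransGen.tail hl hf)
        · left; rw [e]; exact Relation.TransGen.single hf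
  -- connectivity lemmas
  have hconn_root : ∀ X (hX : X ∈ P), ∀ v ∈ X,
      Relation.ReflTransGen (arcRel AF) v (qf X hX) := by
    intro X hX v hv
    exact Relation.ReflTransGen.mono (fun a b h => hTAF X hX h) _ _
      ((hTtree X hX).2.2.2.2 v hv)
  have hconn_same : ∀ X, X ∈ P → ∀ v ∈ X, ∀ w ∈ X, Conn AF v w := by
    intro X hX v hv w hw
    exact Relation.EqvGen.trans _ _ _ (rtg_eqvGen (hconn_root X hX v hv))
      (Relation.EqvGen.symm _ _ (rtg_eqvGen (hconn_root X hX w hw)))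
  have hconn_arc : ∀ X Y, (X, Y) ∈ F' → ∀ v ∈ X, ∀ w ∈ Y, Conn AF v w := by
    intro X Y hXY v hv w hw
    obtain ⟨hXP, hYP, -⟩ := hF'P X Y hXY
    obtain ⟨p, hpC, hpY⟩ := hCex X hXP Y hXY
    have hp1 : p.1 = qf X hXP := (hCarc X hXP p hpC).1
    have hpAF : (p.1, p.2) ∈ AF := by rw [Prod.mk.eta]; exact hCAF X hXP hpC
    have h1 : Conn AF v p.1 := by
      rw [hp1]; exact rtg_eqvGen (hconn_root X hXP v hv)
    have h2 : Conn AF p.1 p.2 := Relation.EqvGen.rel _ _ hpAF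
    have h3 : Conn AF p.2 w := hconn_same Y hYP p.2 hpY w hw
    exact Relation.EqvGen.trans _ _ _ (Relation.EqvGen.trans _ _ _ h1 h2) h3
  have hEq_or : ∀ a b : Finset V, Relation.EqvGen (arcRel F') a b →
      a = b ∨ (a ∈ P ∧ b ∈ P) := by
    intro a b h
    induction h with
    | rel x y h => exact Or.inr ⟨(hF'P x y h).1, (hF'P x y h).2.1⟩
    | refl x => exact Or.inl rfl
    | symm x y _ ih =>
      rcases ih with rfl | ⟨h1, h2⟩
      · exact Or.inl rfl
      · exact Or.inr ⟨h2, h1⟩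
    | trans x y z _ _ ih1 ih2 =>
      rcases ih1 with rfl | h1
      · exact ih2
      rcases ih2 with rfl | h2
      · exact Or.inr h1
      exact Or.inr ⟨h1.1, h2.2⟩
  have hlift : ∀ X Y : Finset V, Relation.EqvGen (arcRel F') X Y →
      X ∈ P → Y ∈ P → ∀ v ∈ X, ∀ w ∈ Y, Conn AF v w := by
    intro X Y h
    induction h with
    | rel x y hxy => exact fun _ _ v hv w hw => hconn_arc x y hxy v hv w hw
    | refl x => exact fun hx _ v hv w hw => hconn_same x hx v hv w hw
    | symm x y _ ih =>
      intro hy hx v hv w hw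
      exact Relation.EqvGen.symm _ _ (ih hx hy w hw v hv)
    | trans x y z hxy _ ih1 ih2 =>
      intro hx hz v hv w hw
      rcases hEq_or x y hxy with rfl | ⟨-, hy⟩
      · exact ih2 hx hz v hv w hw
      · obtain ⟨u, hu⟩ := (hPne y hy).1
        exact Relation.EqvGen.trans _ _ _ (ih1 hx hy v hv u hu) (ih2 hy hz u hu w hw)
  have hdown : ∀ v w, Conn AF v w → Relation.EqvGen (arcRel F') (cls v) (cls w) := by
    intro v w h
    induction h with
    | rel a b hab =>
      rcases harc _ hab with ⟨-, h2⟩ | hf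
      · rw [show cls b = cls a from h2]
        exact Relation.EqvGen.refl _
      · exact Relation.EqvGen.rel _ _ hf
    | refl a => exact Relation.EqvGen.refl _
    | symm _ _ _ ih => exact Relation.EqvGen.symm _ _ ih
    | trans _ _ _ _ _ ih1 ih2 => exact Relation.EqvGen.trans _ _ _ ih1 ih2
  -- assemble
  refine ⟨AF, ?_, ⟨fun p _ => ⟨mem_univ _, mem_univ _⟩, ?_, ?_⟩, ?_, ?_, ?_⟩
  · -- AF ⊆ AΨ
    intro p hp
    obtain ⟨X, hX, hp | hp⟩ := (hmemAF p).mp hp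
    · rw [hTdef hX] at hp; exact hAsub X hX hp
    · rw [hCdef hX] at hp; exact hCsub X hX hp
  · -- functionality
    intro a b c hab hac
    obtain ⟨X, hX, h1⟩ := (hmemAF (a, b)).mp hab
    obtain ⟨Y, hY, h2⟩ := (hmemAF (a, c)).mp hac
    have haX : a ∈ X := by
      rcases h1 with h | h
      · exact (hTin X hX _ h).1
      · have := (hCarc X hX _ h).1
        simp only at this
        rw [this]; exact hqmem X hX
    have haY : a ∈ Y := by
      rcases h2 with h | h
      · exact (hTin Y hY _ h).1
      · have := (hCarc Y hY _ h).1
        simp only at this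
        rw [this]; exact hqmem Y hY
    have e : X = Y := (huni a X hX haX).trans (huni a Y hY haY).symm
    subst e
    by_cases hqc : a = qf X hX
    · have h1' : (a, b) ∈ Cr X := by
        rcases h1 with h | h
        · exact absurd (show (qf X hX, b) ∈ T X by rw [← hqc]; exact h)
            ((hTtree X hX).2.2.2.1 b)
        · exact h
      have h2' : (a, c) ∈ Cr X := by
        rcases h2 with h | h
        · exact absurd (show (qf X hX, c) ∈ T X by rw [← hqc]; exact h)
            ((hTtree X hX).2.2.2.1 c)
        · exact h
      have := hCuniq X hX _ h1' _ h2'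
      exact congrArg Prod.snd this
    · have h1' : (a, b) ∈ T X := by
        rcases h1 with h | h
        · exact h
        · exact absurd (hCarc X hX _ h).1 hqc
      have h2' : (a, c) ∈ T X := by
        rcases h2 with h | h
        · exact h
        · exact absurd (hCarc X hX _ h).1 hqc
      exact hTfun X hX a b c h1' h2'
  · -- acyclicity
    intro v hcyc
    rcases hproj v v hcyc with h | ⟨-, ht⟩
    · exact hF'acyc (cls v) h
    · exact hTacyc (cls v) (hclsP v) v ht
  · -- k components
    obtain ⟨R, hRP, hRk, hRuni⟩ := hF'k
    have hinj : Function.Injective (fun X : {x // x ∈ R} => qf X.1 (hRP X.2)) := by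
      intro X Y h
      have h1 : qf X.1 (hRP X.2) ∈ X.1 := hqmem _ _
      have h2 : qf Y.1 (hRP Y.2) ∈ Y.1 := hqmem _ _
      have h' : qf X.1 (hRP X.2) = qf Y.1 (hRP Y.2) := h
      rw [h'] at h1
      have e : X.1 = Y.1 :=
        (huni _ _ (hRP X.2) h1).trans (huni _ _ (hRP Y.2) h2).symm
      exact Subtype.ext e
    refine ⟨R.attach.image (fun X => qf X.1 (hRP X.2)), Finset.subset_univ _, ?_, ?_⟩
    · have hc := Finset.card_image_of_injective R.attach hinj
      rw [hc, Finset.card_attach, hRk]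
    · intro v _
      obtain ⟨W, ⟨hWR, hWc⟩, hWuniq⟩ := hRuni (cls v) (hclsP v)
      refine ⟨qf W (hRP hWR), ⟨?_, ?_⟩, ?_⟩
      · exact Finset.mem_image.mpr ⟨⟨W, hWR⟩, Finset.mem_attach _ _, rfl⟩
      · exact hlift (cls v) W hWc (hclsP v) (hRP hWR) v (hclsmem v) _ (hqmem W (hRP hWR))
      · rintro w ⟨hwReps, hwConn⟩
        obtain ⟨⟨W', hW'R⟩, -, rfl⟩ := Finset.mem_image.mp hwReps
        have h5 := hdown v _ hwConn
        have e : W' = cls (qf W' (hRP hW'R)) := huni _ _ (hRP hW'R) (hqmem _ _)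
        rw [← e] at h5
        have hWW : W' = W := hWuniq W' ⟨hW'R, h5⟩
        subst hWW
        rfl
  · -- tree-divisible
    intro X hX
    refine ⟨qf X hX, ?_⟩
    have e : restrict AF X = T X := by
      ext p
      simp only [_root_.restrict, Finset.mem_filter]
      constructor
      · rintro ⟨hp, h1, h2⟩
        obtain ⟨Z, hZ, hp | hp⟩ := (hmemAF p).mp hp
        · have eZ : Z = X :=
            (huni p.1 Z hZ (hTin Z hZ p hp).1).trans (huni p.1 X hX h1).symm
          rw [← eZ]; exact hp
        · exfalso
          obtain ⟨hpq, Y, hXY, hpY⟩ := hCarc Z hZ p hp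
          have hp1Z : p.1 ∈ Z := by rw [hpq]; exact hqmem Z hZ
          have eZ : Z = X := (huni p.1 Z hZ hp1Z).trans (huni p.1 X hX h1).symm
          have eY : Y = X :=
            (huni p.2 Y (hF'P _ _ hXY).2.1 hpY).trans (huni p.2 X hX h2).symm
          exact (hF'P _ _ hXY).2.2 (eZ.trans eY.symm)
      · intro hp
        exact ⟨hTAF X hX hp, (hTin X hX p hp).1, (hTin X hX p hp).2⟩
    rw [e]
    exact hTtree X hX
  · -- splitting equals F'
    ext Q
    obtain ⟨X, Y⟩ := Q
    simp only [splitArcsOf, Finset.mem_filter, Finset.mem_product]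
    constructor
    · rintro ⟨⟨hX, hY⟩, hne, p, hp, h1, h2⟩
      obtain ⟨Z, hZ, hp | hp⟩ := (hmemAF p).mp hp
      · exfalso
        have eX : Z = X := (huni p.1 Z hZ (hTin Z hZ p hp).1).trans (huni p.1 X hX h1).symm
        have eY : Z = Y := (huni p.2 Z hZ (hTin Z hZ p hp).2).trans (huni p.2 Y hY h2).symm
        exact hne (eX.symm.trans eY)
      · obtain ⟨hpq, Y', hY'F, hpY'⟩ := hCarc Z hZ p hp
        have hp1Z : p.1 ∈ Z := by rw [hpq]; exact hqmem Z hZ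
        have eZ : Z = X := (huni p.1 Z hZ hp1Z).trans (huni p.1 X hX h1).symm
        have eY : Y' = Y :=
          (huni p.2 Y' (hF'P _ _ hY'F).2.1 hpY').trans (huni p.2 Y hY h2).symm
        rw [← eZ, ← eY]
        exact hY'F
    · intro hXY
      obtain ⟨hX, hY, hne⟩ := hF'P X Y hXY
      obtain ⟨p, hpC, hpY⟩ := hCex X hX Y hXY
      refine ⟨⟨hX, hY⟩, hne, p, hCAF X hX hpC, ?_, hpY⟩
      rw [(hCarc X hX p hpC).1]
      exact hqmem X hX
end

section
/- Let F′ be a k-component spanning forest of the splitting digraph Ψ|ℵ and F a principal of F′. Then F has minimum weight among all principals of F′ if and only if: (i) Υ^F_Z = λ^•_Z for every Z ∈ ℵ containing a root of F; (ii) Υ^F_X = λ_{XY} for every arc (X,Y) of F′; and (iii) Υ^{F|_X} = λ^{•x}_X where x is the root of the induced tree F|_X, for every X not containing a root of F. -/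
open Finset

/-- `AF` is a principal of the spanning forest `F'` of the splitting digraph: a
tree-divisible spanning entering forest of `Ψ` whose splitting has arc set `A(F')`. -/
def IsPrincipal {V : Type*} [Fintype V] [DecidableEq V] (AΨ : Finset (V × V))
    (P : Finset (Finset V)) (F' : Finset (Finset V × Finset V))
    (AF : Finset (V × V)) : Prop :=
  AF ⊆ AΨ ∧ IsEnteringForestOn (Finset.univ : Finset V) AF ∧
    TreeDivisible AF P ∧ splitArcsOf AF P = F'

section StmtHelpers

lemma no_cycle_of_functional {V : Type*} {R : V → V → Prop} {q : V}
    (hf : ∀ v z z', R v z → R v z' → z = z')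
    (hq : ∀ z, ¬ R q z) {v : V} (hreach : Relation.ReflTransGen R v q) :
    ¬ Relation.TransGen R v v := by
  intro hc
  have key : ∀ u, Relation.ReflTransGen R u q → Relation.TransGen R u u →
      Relation.TransGen R q q := by
    intro u hu
    induction hu using Relation.ReflTransGen.head_induction_on with
    | refl => exact fun h => h
    | head hab hbq ih =>
      intro hcyc
      rcases Relation.TransGen.head'_iff.1 hcyc with ⟨c, hac, hca⟩
      have hcb : c = _ := hf _ _ _ hac hab
      subst hcb
      exact ih (Relation.TransGen.tail' hca hab)
  rcases Relation.TransGen.head'_iff.1 (key v hreach hc) with ⟨z, hz, -⟩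
  exact hq z hz

lemma tree_functional {V : Type*} {X : Finset V} {q : V} {A : Finset (V × V)}
    (ht : IsRootedTreeOn X q A) :
    ∀ v z z', (v, z) ∈ A → (v, z') ∈ A → z = z' := by
  intro v z z' h h'
  by_cases hvq : v = q
  · exact absurd (hvq ▸ h) (ht.2.2.2.1 z)
  · exact ((ht.2.2.1 v (ht.2.1 _ h).1 hvq).unique h h')

lemma tree_no_cycle {V : Type*} {X : Finset V} {q : V} {A : Finset (V × V)}
    (ht : IsRootedTreeOn X q A) (v : V) :
    ¬ Relation.TransGen (arcRel A) v v := by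
  intro hc
  rcases Relation.TransGen.head'_iff.1 hc with ⟨c, hvc, -⟩
  have hvX : v ∈ X := (ht.2.1 _ hvc).1
  exact no_cycle_of_functional (fun a z z' => tree_functional ht a z z')
    ht.2.2.2.1 (ht.2.2.2.2 v hvX) hc

lemma part_unique {V : Type*} [Fintype V] {P : Finset (Finset V)}
    (hpart : IsPartitionOn (Finset.univ : Finset V) P) {X Y : Finset V} {v : V}
    (hX : X ∈ P) (hY : Y ∈ P) (hvX : v ∈ X) (hvY : v ∈ Y) : X = Y := by
  obtain ⟨W, -, huniq⟩ := hpart.2 v (mem_univ v)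
  rw [huniq X ⟨hX, hvX⟩, huniq Y ⟨hY, hvY⟩]

lemma part_exists {V : Type*} [Fintype V] {P : Finset (Finset V)}
    (hpart : IsPartitionOn (Finset.univ : Finset V) P) (v : V) :
    ∃ X ∈ P, v ∈ X := by
  obtain ⟨W, ⟨hW, hvW⟩, -⟩ := hpart.2 v (mem_univ v)
  exact ⟨W, hW, hvW⟩

lemma transgen_decomp {V : Type*} [Fintype V] [DecidableEq V] {A : Finset (V × V)}
    {P : Finset (Finset V)} (hpart : IsPartitionOn (Finset.univ : Finset V) P)
    {a b : V} (h : Relation.TransGen (arcRel A) a b) :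
    ∀ X ∈ P, a ∈ X → ∀ Y ∈ P, b ∈ Y →
      (X = Y ∧ Relation.TransGen (arcRel (restrict A X)) a b) ∨
      Relation.TransGen (arcRel (splitArcsOf A P)) X Y := by
  induction h with
  | single hab =>
    rename_i b'
    intro X hX haX Y hY hbY
    by_cases hbX : b' ∈ X
    · left
      refine ⟨part_unique hpart hX hY hbX hbY, Relation.TransGen.single ?_⟩
      show (_, b') ∈ _root_.restrict A X
      simp only [_root_.restrict, mem_filter]
      exact ⟨hab, haX, hbX⟩
    · right
      refine Relation.TransGen.single ?_
      show (X, Y) ∈ splitArcsOf A P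
      simp only [splitArcsOf, mem_filter, mem_product]
      exact ⟨⟨hX, hY⟩, fun hXY => hbX (hXY ▸ hbY), _, hab, haX, hbY⟩
  | tail hac hcb ih =>
    rename_i c b'
    intro X hX haX Y hY hbY
    obtain ⟨Z, hZ, hcZ⟩ := part_exists hpart c
    by_cases hbZ : b' ∈ Z
    · have hYZ : Y = Z := part_unique hpart hY hZ hbY hbZ
      subst hYZ
      rcases ih X hX haX Y hZ hcZ with ⟨hXY, htr⟩ | hsp
      · left
        subst hXY
        refine ⟨rfl, htr.tail ?_⟩
        show (c, b') ∈ _root_.restrict A X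
        simp only [_root_.restrict, mem_filter]
        exact ⟨hcb, hcZ, hbZ⟩
      · exact Or.inr hsp
    · have hsplit : (Z, Y) ∈ splitArcsOf A P := by
        simp only [splitArcsOf, mem_filter, mem_product]
        exact ⟨⟨hZ, hY⟩, fun hZY => hbZ (hZY ▸ hbY), _, hcb, hcZ, hbY⟩
      rcases ih X hX haX Z hZ hcZ with ⟨hXZ, -⟩ | hsp
      · exact Or.inr (Relation.TransGen.single (hXZ ▸ hsplit))
      · exact Or.inr (hsp.tail hsplit)

lemma forest_acyclic {V : Type*} [Fintype V] [DecidableEq V] {A : Finset (V × V)}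
    {P : Finset (Finset V)} {F' : Finset (Finset V × Finset V)}
    (hpart : IsPartitionOn (Finset.univ : Finset V) P)
    (hdiv : TreeDivisible A P) (hsplit : splitArcsOf A P = F')
    (hF'ac : ∀ Z : Finset V, ¬ Relation.TransGen (arcRel F') Z Z) (v : V) :
    ¬ Relation.TransGen (arcRel A) v v := by
  intro hc
  obtain ⟨X, hX, hvX⟩ := part_exists hpart v
  rcases transgen_decomp hpart hc X hX hvX X hX hvX with ⟨-, hcyc⟩ | hcyc
  · obtain ⟨q, ht⟩ := hdiv X hX
    exact tree_no_cycle ht v hcyc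
  · rw [hsplit] at hcyc
    exact hF'ac X hcyc

lemma totW_eq_sum_outW {V : Type*} [Fintype V] [DecidableEq V] (w : V → V → ℝ)
    {P : Finset (Finset V)} (hpart : IsPartitionOn (Finset.univ : Finset V) P)
    (A : Finset (V × V)) : totW w A = ∑ X ∈ P, outW w A X := by
  have h1 : ∀ X ∈ P, outW w A X = ∑ p ∈ A, if p.1 ∈ X then w p.1 p.2 else 0 :=
    fun X _ => by rw [outW, Finset.sum_filter]
  rw [Finset.sum_congr rfl h1, Finset.sum_comm, totW]
  apply Finset.sum_congr rfl
  intro p _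
  obtain ⟨X, ⟨hX, hpX⟩, huniq⟩ := hpart.2 p.1 (mem_univ _)
  rw [Finset.sum_eq_single_of_mem X hX]
  · rw [if_pos hpX]
  · intro Y hY hne
    exact if_neg (fun h => hne (huniq Y ⟨hY, h⟩))

lemma nonroot_arc {V : Type*} [DecidableEq V] {A : Finset (V × V)} {X : Finset V} {q : V}
    (hfun : ∀ v z z', (v, z) ∈ A → (v, z') ∈ A → z = z')
    (ht : IsRootedTreeOn X q (restrict A X))
    {v z : V} (hv : v ∈ X) (hne : v ≠ q) (h : (v, z) ∈ A) : (v, z) ∈ restrict A X := by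
  obtain ⟨z', hz', -⟩ := ht.2.2.1 v hv hne
  have hz'A : (v, z') ∈ A := (mem_filter.1 hz').1
  rwa [hfun v z z' h hz'A]

lemma root_arc_out {V : Type*} [DecidableEq V] {A : Finset (V × V)} {X : Finset V} {q : V}
    (ht : IsRootedTreeOn X q (restrict A X)) {z : V} (h : (q, z) ∈ A) : z ∉ X :=
  fun hz => ht.2.2.2.1 z (mem_filter.2 ⟨h, ht.1, hz⟩)

lemma filter_tail_noout {V : Type*} [DecidableEq V] {A : Finset (V × V)} {X : Finset V}
    {q : V} (hfun : ∀ v z z', (v, z) ∈ A → (v, z') ∈ A → z = z')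
    (ht : IsRootedTreeOn X q (restrict A X)) (hq : ∀ z, (q, z) ∉ A) :
    A.filter (fun p => p.1 ∈ X) = restrict A X := by
  ext ⟨a, b⟩
  simp only [mem_filter, _root_.restrict]
  constructor
  · rintro ⟨hab, ha⟩
    refine ⟨hab, ha, ?_⟩
    by_cases hne : a = q
    · exact absurd hab (by rw [hne]; exact hq b)
    · exact (mem_filter.1 (nonroot_arc hfun ht ha hne hab)).2.2
  · rintro ⟨hab, ha, -⟩
    exact ⟨hab, ha⟩

lemma outW_noout {V : Type*} [DecidableEq V] (w : V → V → ℝ) {A : Finset (V × V)}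
    {X : Finset V} {q : V} (hfun : ∀ v z z', (v, z) ∈ A → (v, z') ∈ A → z = z')
    (ht : IsRootedTreeOn X q (restrict A X)) (hq : ∀ z, (q, z) ∉ A) :
    outW w A X = totW w (restrict A X) := by
  unfold outW totW
  rw [filter_tail_noout hfun ht hq]

lemma filter_tail_out {V : Type*} [DecidableEq V] {A : Finset (V × V)} {X : Finset V}
    {q r : V} (hfun : ∀ v z z', (v, z) ∈ A → (v, z') ∈ A → z = z')
    (ht : IsRootedTreeOn X q (restrict A X)) (hr : (q, r) ∈ A) :
    A.filter (fun p => p.1 ∈ X) = insert (q, r) (restrict A X) := by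
  ext ⟨a, b⟩
  simp only [mem_filter, _root_.restrict, mem_insert, Prod.mk.injEq]
  constructor
  · rintro ⟨hab, ha⟩
    by_cases hne : a = q
    · subst hne
      exact Or.inl ⟨rfl, hfun a b r hab hr⟩
    · exact Or.inr ⟨hab, ha, (mem_filter.1 (nonroot_arc hfun ht ha hne hab)).2.2⟩
  · rintro (⟨rfl, rfl⟩ | ⟨hab, ha, -⟩)
    · exact ⟨hr, ht.1⟩
    · exact ⟨hab, ha⟩

lemma outW_out {V : Type*} [DecidableEq V] (w : V → V → ℝ) {A : Finset (V × V)}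
    {X : Finset V} {q r : V} (hfun : ∀ v z z', (v, z) ∈ A → (v, z') ∈ A → z = z')
    (ht : IsRootedTreeOn X q (restrict A X)) (hr : (q, r) ∈ A) :
    outW w A X = totW w (restrict A X) + w q r := by
  unfold outW totW
  rw [filter_tail_out hfun ht hr, Finset.sum_insert (fun h => ht.2.2.2.1 r h)]
  ring

lemma principal_noout {V : Type*} [Fintype V] [DecidableEq V] (w : V → V → ℝ)
    {AΨ : Finset (V × V)} {P : Finset (Finset V)} {F' : Finset (Finset V × Finset V)}
    {G : Finset (V × V)} (hpart : IsPartitionOn (Finset.univ : Finset V) P)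
    (hG : IsPrincipal AΨ P F' G) {X : Finset V} (hX : X ∈ P)
    (hnoF' : ∀ Y, (X, Y) ∉ F') :
    ∃ q, IsRootedTreeOn X q (restrict G X) ∧ (∀ z, (q, z) ∉ G) ∧
      outW w G X = totW w (restrict G X) := by
  obtain ⟨q, ht⟩ := hG.2.2.1 X hX
  have hfun := hG.2.1.2.1
  have hq : ∀ z, (q, z) ∉ G := by
    intro z hz
    have hzX : z ∉ X := root_arc_out ht hz
    obtain ⟨Y, hY, hzY⟩ := part_exists hpart z
    apply hnoF' Y
    rw [← hG.2.2.2]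
    simp only [splitArcsOf, mem_filter, mem_product]
    exact ⟨⟨hX, hY⟩, fun h => hzX (by rw [h]; exact hzY), (q, z), hz, ht.1, hzY⟩
  exact ⟨q, ht, hq, outW_noout w hfun ht hq⟩

lemma principal_out {V : Type*} [Fintype V] [DecidableEq V] (w : V → V → ℝ)
    {AΨ : Finset (V × V)} {P : Finset (Finset V)} {F' : Finset (Finset V × Finset V)}
    {G : Finset (V × V)} (hpart : IsPartitionOn (Finset.univ : Finset V) P)
    (hG : IsPrincipal AΨ P F' G) {X Y : Finset V} (hX : X ∈ P) (hY : Y ∈ P)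
    (hXY : (X, Y) ∈ F') :
    ∃ q r, IsRootedTreeOn X q (restrict G X) ∧ r ∈ Y ∧ (q, r) ∈ G ∧
      outW w G X = totW w (restrict G X) + w q r := by
  obtain ⟨q, ht⟩ := hG.2.2.1 X hX
  have hfun := hG.2.1.2.1
  rw [← hG.2.2.2] at hXY
  simp only [splitArcsOf, mem_filter, mem_product] at hXY
  obtain ⟨⟨-, -⟩, hne, ⟨a, b⟩, hpG, hp1, hp2⟩ := hXY
  have hp1q : a = q := by
    by_contra hne'
    have hmem := nonroot_arc hfun ht hp1 hne' hpG
    have hp2X : b ∈ X := (mem_filter.1 hmem).2.2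
    exact hne (part_unique hpart hX hY hp2X hp2)
  subst hp1q
  exact ⟨a, b, ht, hp2, hpG, outW_out w hfun ht hpG⟩

lemma bdd_of_weights {V : Type*} [DecidableEq V] (w : V → V → ℝ) (AΨ : Finset (V × V))
    {S : Set ℝ} (h : ∀ t ∈ S, ∃ A : Finset (V × V), A ⊆ AΨ ∧ t = totW w A) :
    BddBelow S := by
  have hsub : S ⊆ ↑(AΨ.powerset.image (totW w)) := by
    intro t ht
    obtain ⟨A, hA, rfl⟩ := h t ht
    simp only [coe_image, Set.mem_image, mem_coe, mem_powerset]
    exact ⟨A, hA, rfl⟩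
  exact (Set.Finite.subset (finite_toSet _) hsub).bddBelow

lemma swap_principal {V : Type*} [Fintype V] [DecidableEq V] (w : V → V → ℝ)
    {AΨ : Finset (V × V)} {P : Finset (Finset V)} {F' : Finset (Finset V × Finset V)}
    (hpart : IsPartitionOn (Finset.univ : Finset V) P)
    (hF'sub : ↑F' ⊆ psiSplitArcs AΨ P)
    (hF'ac : ∀ Z : Finset V, ¬ Relation.TransGen (arcRel F') Z Z)
    {G : Finset (V × V)} (hG : IsPrincipal AΨ P F' G)
    {X : Finset V} (hX : X ∈ P) {q' : V} {B E : Finset (V × V)}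
    (hB : IsRootedTreeOn X q' B) (hBsub : B ⊆ AΨ)
    (hEsub : E ⊆ AΨ) (hE1 : ∀ p ∈ E, p.1 = q' ∧ p.2 ∉ X)
    (hEuniq : ∀ p ∈ E, ∀ p' ∈ E, p = p')
    (hmatch : ∀ Y ∈ P, ((X, Y) ∈ F' ↔ ∃ p ∈ E, p.2 ∈ Y)) :
    IsPrincipal AΨ P F' (G \ G.filter (fun p => p.1 ∈ X) ∪ B ∪ E) ∧
      totW w (G \ G.filter (fun p => p.1 ∈ X) ∪ B ∪ E) =
        totW w G - outW w G X + totW w B + totW w E := by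
  set S := G.filter (fun p => p.1 ∈ X) with hS
  set G' := G \ S ∪ B ∪ E with hG'
  have hmemG' : ∀ p, p ∈ G' ↔ (p ∈ G ∧ p.1 ∉ X) ∨ p ∈ B ∨ p ∈ E := by
    intro p
    simp only [hG', hS, mem_union, mem_sdiff, mem_filter]
    tauto
  have hBX : ∀ p ∈ B, p.1 ∈ X ∧ p.2 ∈ X := hB.2.1
  have hEX : ∀ p ∈ E, p.1 ∈ X := fun p hp => (hE1 p hp).1.symm ▸ hB.1
  have htailX : ∀ p ∈ G', p.1 ∈ X → p ∈ B ∨ p ∈ E := by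
    intro p hp h1
    rcases (hmemG' p).1 hp with ⟨-, hn⟩ | h
    · exact absurd h1 hn
    · exact h
  have hGsub := hG.1
  have hfunG := hG.2.1.2.1
  have hfun' : ∀ v z z', (v, z) ∈ G' → (v, z') ∈ G' → z = z' := by
    intro v z z' h h'
    by_cases hvX : v ∈ X
    · have h1 := htailX _ h hvX
      have h2 := htailX _ h' hvX
      by_cases hvq : v = q'
      · subst hvq
        rcases h1 with hb | he
        · exact absurd hb (hB.2.2.2.1 z)
        · rcases h2 with hb | he'
          · exact absurd hb (hB.2.2.2.1 z')
          · exact congrArg Prod.snd (hEuniq _ he _ he')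
      · have hBz : (v, z) ∈ B := by
          rcases h1 with hb | he
          · exact hb
          · exact absurd (hE1 _ he).1 hvq
        have hBz' : (v, z') ∈ B := by
          rcases h2 with hb | he
          · exact hb
          · exact absurd (hE1 _ he).1 hvq
        exact (hB.2.2.1 v hvX hvq).unique hBz hBz'
    · have hGz : (v, z) ∈ G := by
        rcases (hmemG' _).1 h with ⟨hg, -⟩ | hb | he
        · exact hg
        · exact absurd (hBX _ hb).1 hvX
        · exact absurd (hEX _ he) hvX
      have hGz' : (v, z') ∈ G := by
        rcases (hmemG' _).1 h' with ⟨hg, -⟩ | hb | he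
        · exact hg
        · exact absurd (hBX _ hb).1 hvX
        · exact absurd (hEX _ he) hvX
      exact hfunG v z z' hGz hGz'
  have hresX : restrict G' X = B := by
    ext ⟨a, b⟩
    simp only [_root_.restrict, mem_filter]
    constructor
    · rintro ⟨hab, ha, hb⟩
      rcases htailX _ hab ha with hb' | he
      · exact hb'
      · exact absurd hb (hE1 _ he).2
    · intro hb
      exact ⟨(hmemG' _).2 (Or.inr (Or.inl hb)), (hBX _ hb).1, (hBX _ hb).2⟩
  have hresZ : ∀ Z ∈ P, Z ≠ X → restrict G' Z = restrict G Z := by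
    intro Z hZ hne
    ext ⟨a, b⟩
    simp only [_root_.restrict, mem_filter]
    constructor
    · rintro ⟨hab, ha, hb⟩
      have haX : a ∉ X := fun h => hne (part_unique hpart hZ hX ha h)
      rcases (hmemG' _).1 hab with ⟨hg, -⟩ | hbb | hee
      · exact ⟨hg, ha, hb⟩
      · exact absurd (hBX _ hbb).1 haX
      · exact absurd (hEX _ hee) haX
    · rintro ⟨hab, ha, hb⟩
      have haX : a ∉ X := fun h => hne (part_unique hpart hZ hX ha h)
      exact ⟨(hmemG' _).2 (Or.inl ⟨hab, haX⟩), ha, hb⟩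
  have hdiv' : TreeDivisible G' P := by
    intro Z hZ
    by_cases hZX : Z = X
    · subst hZX
      rw [hresX]
      exact ⟨q', hB⟩
    · rw [hresZ Z hZ hZX]
      exact hG.2.2.1 Z hZ
  have hsplit' : splitArcsOf G' P = F' := by
    ext ⟨Z, Y⟩
    by_cases hZX : Z = X
    · subst hZX
      simp only [splitArcsOf, mem_filter, mem_product]
      constructor
      · rintro ⟨⟨-, hY⟩, hne, p, hpG', hp1, hp2⟩
        rcases htailX _ hpG' hp1 with hbb | hee
        · exact absurd (part_unique hpart hX hY (hBX _ hbb).2 hp2) hne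
        · exact (hmatch Y hY).2 ⟨p, hee, hp2⟩
      · intro hF
        have hps := hF'sub (Finset.mem_coe.2 hF)
        obtain ⟨hXP, hYP, hneXY, -⟩ := hps
        obtain ⟨p, hpE, hp2⟩ := (hmatch Y hYP).1 hF
        exact ⟨⟨hX, hYP⟩, hneXY, p, (hmemG' p).2 (Or.inr (Or.inr hpE)), hEX _ hpE, hp2⟩
    · constructor
      · intro hmem
        simp only [splitArcsOf, mem_filter, mem_product] at hmem
        obtain ⟨⟨hZ, hY⟩, hne, p, hpG', hp1, hp2⟩ := hmem
        have haX : p.1 ∉ X := fun h => hZX (part_unique hpart hZ hX hp1 h)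
        have hpG : p ∈ G := by
          rcases (hmemG' _).1 hpG' with ⟨hg, -⟩ | hbb | hee
          · exact hg
          · exact absurd (hBX _ hbb).1 haX
          · exact absurd (hEX _ hee) haX
        rw [← hG.2.2.2]
        simp only [splitArcsOf, mem_filter, mem_product]
        exact ⟨⟨hZ, hY⟩, hne, p, hpG, hp1, hp2⟩
      · intro hF
        rw [← hG.2.2.2] at hF
        simp only [splitArcsOf, mem_filter, mem_product] at hF
        obtain ⟨⟨hZ, hY⟩, hne, p, hpG, hp1, hp2⟩ := hF
        have haX : p.1 ∉ X := fun h => hZX (part_unique hpart hZ hX hp1 h)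
        simp only [splitArcsOf, mem_filter, mem_product]
        exact ⟨⟨hZ, hY⟩, hne, p, (hmemG' _).2 (Or.inl ⟨hpG, haX⟩), hp1, hp2⟩
  have hac' : ∀ v, ¬ Relation.TransGen (arcRel G') v v :=
    forest_acyclic hpart hdiv' hsplit' hF'ac
  have hsub' : G' ⊆ AΨ := by
    intro p hp
    rcases (hmemG' p).1 hp with ⟨hg, -⟩ | hbb | hee
    · exact hGsub hg
    · exact hBsub hbb
    · exact hEsub hee
  refine ⟨⟨hsub', ⟨fun p _ => ⟨mem_univ _, mem_univ _⟩, hfun', hac'⟩, hdiv', hsplit'⟩, ?_⟩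
  have hdisj1 : Disjoint (G \ S) B := by
    rw [Finset.disjoint_left]
    intro p hp hpB
    exact (mem_sdiff.1 hp).2 (mem_filter.2 ⟨(mem_sdiff.1 hp).1, (hBX _ hpB).1⟩)
  have hdisj2 : Disjoint (G \ S ∪ B) E := by
    rw [Finset.disjoint_left]
    intro p hp hpE
    rcases mem_union.1 hp with h | h
    · exact (mem_sdiff.1 h).2 (mem_filter.2 ⟨(mem_sdiff.1 h).1, hEX _ hpE⟩)
    · exact absurd (show (q', p.2) ∈ B by rw [← (hE1 _ hpE).1]; exact h) (hB.2.2.2.1 p.2)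
  have hSsub : S ⊆ G := filter_subset _ _
  simp only [totW, outW, hG']
  rw [Finset.sum_union hdisj2, Finset.sum_union hdisj1, Finset.sum_sdiff_eq_sub hSsub, ← hS]

end StmtHelpers

/-- characterization of minimal principals. A principal `F` of `F'` has
minimum weight among all principals of `F'` iff (i) `Υ^F_Z = λ^•_Z` for every `Z ∈ ℵ`
containing a root of `F`, (ii) `Υ^F_X = λ_{XY}` for every arc `(X,Y)` of `F'`, and
(iii) `Υ^{F|_X} = λ^{•x}_X` with `x` the root of `F|_X`, for every `X` containing no
root of `F`. -/
theorem stmt15 {V : Type*} [Fintype V] [DecidableEq V] (w : V → V → ℝ)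
    (AΨ : Finset (V × V)) (P : Finset (Finset V)) (k : ℕ)
    (hpart : IsPartitionOn (Finset.univ : Finset V) P)
    (hΨdiv : PsiDivisible AΨ P)
    (F' : Finset (Finset V × Finset V)) (hF'sub : ↑F' ⊆ psiSplitArcs AΨ P)
    (hF' : IsEnteringForestOn P F') (hF'k : HasKComponentsOn P F' k)
    (AF : Finset (V × V)) (hprin : IsPrincipal AΨ P F' AF) :
    (∀ G : Finset (V × V), IsPrincipal AΨ P F' G → totW w AF ≤ totW w G) ↔
      ((∀ Z ∈ P, (∃ v ∈ Z, ∀ z, (v, z) ∉ AF) → outW w AF Z = lamB w AΨ Z) ∧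
       (∀ Q ∈ F', outW w AF Q.1 = lamXY w AΨ Q.1 Q.2) ∧
       (∀ X ∈ P, (∀ v ∈ X, ∃ z, (v, z) ∈ AF) →
         ∀ x, IsRootedTreeOn X x (restrict AF X) →
           totW w (restrict AF X) = lamRooted w AΨ X x)) := by
  have hF'ac : ∀ Z : Finset V, ¬ Relation.TransGen (arcRel F') Z Z := hF'.2.2
  have hfunF := hprin.2.1.2.1
  constructor
  · intro hmin
    refine ⟨?_, ?_, ?_⟩
    · -- (i)
      rintro Z hZ ⟨v, hvZ, hv⟩
      obtain ⟨q, htq⟩ := hprin.2.2.1 Z hZ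
      have hvq : v = q := by
        by_contra hne
        obtain ⟨z, hz, -⟩ := htq.2.2.1 v hvZ hne
        exact hv z (mem_filter.1 hz).1
      subst hvq
      have hnoF' : ∀ Y, (Z, Y) ∉ F' := by
        intro Y hZY
        rw [← hprin.2.2.2] at hZY
        simp only [splitArcsOf, mem_filter, mem_product] at hZY
        obtain ⟨⟨-, hY⟩, hne, ⟨a, b⟩, hpG, hp1, hp2⟩ := hZY
        by_cases haq : a = v
        · exact hv b (haq ▸ hpG)
        · have hmem := nonroot_arc hfunF htq hp1 haq hpG
          have hbZ : b ∈ Z := (mem_filter.1 hmem).2.2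
          exact hne (part_unique hpart hZ hY hbZ hp2)
      have houtW : outW w AF Z = totW w (restrict AF Z) := outW_noout w hfunF htq hv
      have hleast : IsLeast {t : ℝ | ∃ q' A', IsRootedTreeOn Z q' A' ∧ A' ⊆ AΨ ∧
          t = totW w A'} (outW w AF Z) := by
        constructor
        · exact ⟨v, restrict AF Z, htq, (filter_subset _ _).trans hprin.1, houtW⟩
        · rintro t ⟨q0, A0, ht0, hsub0, rfl⟩
          have hsw := swap_principal w hpart hF'sub hF'ac hprin hZ (E := ∅) ht0 hsub0
            (empty_subset _) (fun p hp => absurd hp (notMem_empty p))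
            (fun p hp => absurd hp (notMem_empty p))
            (fun Y _ => ⟨fun h => absurd h (hnoF' Y),
              fun ⟨p, hp, _⟩ => absurd hp (notMem_empty p)⟩)
          have hle := hmin _ hsw.1
          rw [hsw.2] at hle
          have h0 : totW w (∅ : Finset (V × V)) = 0 := by simp [totW]
          rw [h0] at hle
          linarith
      exact hleast.csInf_eq.symm
    · -- (ii)
      intro Q hQ
      obtain ⟨hXP, hYP, hneXY, -⟩ := hF'sub (Finset.mem_coe.2 hQ)
      obtain ⟨q, r, ht, hrY, hqr, houtW⟩ := principal_out w hpart hprin hXP hYP hQ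
      have hleast : IsLeast {t : ℝ | ∃ q0 A0 r0, IsRootedTreeOn Q.1 q0 A0 ∧ A0 ⊆ AΨ ∧
          r0 ∈ Q.2 ∧ (q0, r0) ∈ AΨ ∧ t = totW w A0 + w q0 r0} (outW w AF Q.1) := by
        constructor
        · exact ⟨q, restrict AF Q.1, r, ht, (filter_subset _ _).trans hprin.1, hrY,
            hprin.1 hqr, houtW⟩
        · rintro t ⟨q0, A0, r0, ht0, hsub0, hr0, hqr0, rfl⟩
          have hr0X : r0 ∉ Q.1 := fun h => hneXY (part_unique hpart hXP hYP h hr0)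
          have hmatch : ∀ Y ∈ P, ((Q.1, Y) ∈ F' ↔
              ∃ p ∈ ({(q0, r0)} : Finset (V × V)), p.2 ∈ Y) := by
            intro Y hY
            constructor
            · intro h
              have hYQ2 : Y = Q.2 := hF'.2.1 Q.1 Y Q.2 h hQ
              subst hYQ2
              exact ⟨(q0, r0), mem_singleton_self _, hr0⟩
            · rintro ⟨p, hp, hpY⟩
              rw [mem_singleton] at hp
              subst hp
              have hYQ2 : Y = Q.2 := part_unique hpart hY hYP hpY hr0
              subst hYQ2
              exact hQ
          have hsw := swap_principal w hpart hF'sub hF'ac hprin hXP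
            (E := {(q0, r0)}) ht0 hsub0
            (by intro p hp; rw [mem_singleton] at hp; subst hp; exact hqr0)
            (by intro p hp; rw [mem_singleton] at hp; subst hp; exact ⟨rfl, hr0X⟩)
            (by intro p hp p' hp'; rw [mem_singleton] at hp hp'; rw [hp, hp'])
            hmatch
          have hle := hmin _ hsw.1
          rw [hsw.2] at hle
          have h1 : totW w ({(q0, r0)} : Finset (V × V)) = w q0 r0 := by simp [totW]
          rw [h1] at hle
          linarith
      exact hleast.csInf_eq.symm
    · -- (iii)
      intro X hX hall x hx
      have hxX : x ∈ X := hx.1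
      obtain ⟨r, hr⟩ := hall x hxX
      have hrX : r ∉ X := root_arc_out hx hr
      obtain ⟨Y, hY, hrY⟩ := part_exists hpart r
      have hXY : (X, Y) ∈ F' := by
        rw [← hprin.2.2.2]
        simp only [splitArcsOf, mem_filter, mem_product]
        exact ⟨⟨hX, hY⟩, fun h => hrX (by rw [h]; exact hrY), (x, r), hr, hxX, hrY⟩
      have houtW : outW w AF X = totW w (restrict AF X) + w x r := outW_out w hfunF hx hr
      have hleast : IsLeast {t : ℝ | ∃ A0, IsRootedTreeOn X x A0 ∧ A0 ⊆ AΨ ∧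
          t = totW w A0} (totW w (restrict AF X)) := by
        constructor
        · exact ⟨restrict AF X, hx, (filter_subset _ _).trans hprin.1, rfl⟩
        · rintro t ⟨A0, ht0, hsub0, rfl⟩
          have hmatch : ∀ Y' ∈ P, ((X, Y') ∈ F' ↔
              ∃ p ∈ ({(x, r)} : Finset (V × V)), p.2 ∈ Y') := by
            intro Y' hY'
            constructor
            · intro h
              have hYQ : Y' = Y := hF'.2.1 X Y' Y h hXY
              subst hYQ
              exact ⟨(x, r), mem_singleton_self _, hrY⟩
            · rintro ⟨p, hp, hpY⟩
              rw [mem_singleton] at hp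
              subst hp
              rwa [part_unique hpart hY' hY hpY hrY]
          have hsw := swap_principal w hpart hF'sub hF'ac hprin hX
            (E := {(x, r)}) ht0 hsub0
            (by intro p hp; rw [mem_singleton] at hp; subst hp; exact hprin.1 hr)
            (by intro p hp; rw [mem_singleton] at hp; subst hp; exact ⟨rfl, hrX⟩)
            (by intro p hp p' hp'; rw [mem_singleton] at hp hp'; rw [hp, hp'])
            hmatch
          have hle := hmin _ hsw.1
          rw [hsw.2, houtW] at hle
          have h1 : totW w ({(x, r)} : Finset (V × V)) = w x r := by simp [totW]
          rw [h1] at hle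
          linarith
      exact hleast.csInf_eq.symm
  · rintro ⟨h1, h2, h3⟩ G hG
    rw [totW_eq_sum_outW w hpart AF, totW_eq_sum_outW w hpart G]
    apply Finset.sum_le_sum
    intro X hX
    by_cases hout : ∃ Y ∈ P, (X, Y) ∈ F'
    · obtain ⟨Y, hY, hXY⟩ := hout
      obtain ⟨qg, rg, htg, hrg, hqrg, houtG⟩ := principal_out w hpart hG hX hY hXY
      have hAF : outW w AF X = lamXY w AΨ X Y := h2 (X, Y) hXY
      rw [hAF, houtG]
      apply csInf_le
      · apply bdd_of_weights w AΨ
        rintro t ⟨q0, A0, r0, ht0, hsub0, hr0, hqr0, rfl⟩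
        refine ⟨insert (q0, r0) A0, ?_, ?_⟩
        · intro p hp
          rcases mem_insert.1 hp with rfl | hp'
          · exact hqr0
          · exact hsub0 hp'
        · simp only [totW]
          rw [Finset.sum_insert (fun h => ht0.2.2.2.1 r0 h)]
          ring
      · exact ⟨qg, restrict G X, rg, htg, (filter_subset _ _).trans hG.1, hrg,
          hG.1 hqrg, rfl⟩
    · push_neg at hout
      have hnoF' : ∀ Y, (X, Y) ∉ F' := by
        intro Y hXY
        obtain ⟨-, hYP, -, -⟩ := hF'sub (Finset.mem_coe.2 hXY)
        exact hout Y hYP hXY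
      obtain ⟨qf, htf, hqf, houtF⟩ := principal_noout w hpart hprin hX hnoF'
      obtain ⟨qg, htg, hqg, houtG⟩ := principal_noout w hpart hG hX hnoF'
      have hAF : outW w AF X = lamB w AΨ X := h1 X hX ⟨qf, htf.1, hqf⟩
      rw [hAF, houtG]
      apply csInf_le
      · apply bdd_of_weights w AΨ
        rintro t ⟨q0, A0, ht0, hsub0, rfl⟩
        exact ⟨A0, hsub0, rfl⟩
      · exact ⟨qg, restrict G X, htg, (filter_subset _ _).trans hG.1, rfl⟩
end

section
/- Let F′ be a k-component spanning forest of the splitting digraph Ψ|ℵ and F a minimal principal of F′. Then Υ^{F′} = Υ^F − Σ_{Y ∈ ℵ} λ^•_Y. Consequently, F has minimum weight among all tree-divisible k-component spanning forests of Ψ if and only if F′ has minimum weight among all k-component spanning forests of Ψ|ℵ. -/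
open Finset

section Helpers
variable {V : Type*}

lemma lamB_set_finite [DecidableEq V] (w : V → V → ℝ) (A : Finset (V × V)) (X : Finset V) :
    {t : ℝ | ∃ q A', IsRootedTreeOn X q A' ∧ A' ⊆ A ∧ t = totW w A'}.Finite := by
  apply Set.Finite.subset (Set.finite_range (fun B : {B // B ∈ A.powerset} => totW w B.1))
  rintro t ⟨q, A', _, hsub, rfl⟩
  exact ⟨⟨A', Finset.mem_powerset.2 hsub⟩, rfl⟩

lemma lamXY_set_finite [DecidableEq V] (w : V → V → ℝ) (A : Finset (V × V)) (X Y : Finset V) :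
    {t : ℝ | ∃ q A' r, IsRootedTreeOn X q A' ∧ A' ⊆ A ∧ r ∈ Y ∧ (q, r) ∈ A ∧
      t = totW w A' + w q r}.Finite := by
  apply Set.Finite.subset (Set.finite_range
    (fun B : {B // B ∈ A.powerset} × {p // p ∈ A} => totW w B.1.1 + w B.2.1.1 B.2.1.2))
  rintro t ⟨q, A', r, _, hsub, _, hqr, rfl⟩
  exact ⟨⟨⟨A', Finset.mem_powerset.2 hsub⟩, ⟨(q, r), hqr⟩⟩, rfl⟩

lemma lamB_le [DecidableEq V] {w : V → V → ℝ} {A A' : Finset (V × V)} {X : Finset V} {q : V}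
    (hT : IsRootedTreeOn X q A') (hsub : A' ⊆ A) : lamB w A X ≤ totW w A' :=
  csInf_le (lamB_set_finite w A X).bddBelow ⟨q, A', hT, hsub, rfl⟩

lemma lamB_attain [DecidableEq V] {w : V → V → ℝ} {A : Finset (V × V)} {X : Finset V}
    (hne : ∃ q A', IsRootedTreeOn X q A' ∧ A' ⊆ A) :
    ∃ q A', IsRootedTreeOn X q A' ∧ A' ⊆ A ∧ totW w A' = lamB w A X := by
  obtain ⟨q0, A0, h0, hs0⟩ := hne
  have := Set.Nonempty.csInf_mem (s := {t : ℝ | ∃ q A', IsRootedTreeOn X q A' ∧ A' ⊆ A ∧ t = totW w A'})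
    ⟨totW w A0, q0, A0, h0, hs0, rfl⟩ (lamB_set_finite w A X)
  obtain ⟨q, A', h1, h2, h3⟩ := this
  exact ⟨q, A', h1, h2, h3.symm⟩

lemma lamXY_le [DecidableEq V] {w : V → V → ℝ} {A A' : Finset (V × V)} {X Y : Finset V} {q r : V}
    (hT : IsRootedTreeOn X q A') (hsub : A' ⊆ A) (hr : r ∈ Y) (hqr : (q, r) ∈ A) :
    lamXY w A X Y ≤ totW w A' + w q r :=
  csInf_le (lamXY_set_finite w A X Y).bddBelow ⟨q, A', r, hT, hsub, hr, hqr, rfl⟩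

lemma lamXY_attain [DecidableEq V] {w : V → V → ℝ} {A : Finset (V × V)} {X Y : Finset V}
    (hne : ∃ q A' r, IsRootedTreeOn X q A' ∧ A' ⊆ A ∧ r ∈ Y ∧ (q, r) ∈ A) :
    ∃ q A' r, IsRootedTreeOn X q A' ∧ A' ⊆ A ∧ r ∈ Y ∧ (q, r) ∈ A ∧
      totW w A' + w q r = lamXY w A X Y := by
  obtain ⟨q0, A0, r0, h0, hs0, hr0, ha0⟩ := hne
  have := Set.Nonempty.csInf_mem
    (s := {t : ℝ | ∃ q A' r, IsRootedTreeOn X q A' ∧ A' ⊆ A ∧ r ∈ Y ∧ (q, r) ∈ A ∧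
      t = totW w A' + w q r})
    ⟨totW w A0 + w q0 r0, q0, A0, r0, h0, hs0, hr0, ha0, rfl⟩ (lamXY_set_finite w A X Y)
  obtain ⟨q, A', r, h1, h2, h3, h4, h5⟩ := this
  exact ⟨q, A', r, h1, h2, h3, h4, h5.symm⟩

/-- Rooted trees are acyclic. -/
lemma tree_acyclic {X : Finset V} {q : V} {T : Finset (V × V)}
    (h : IsRootedTreeOn X q T) : ∀ v, ¬ Relation.TransGen (arcRel T) v v := by
  obtain ⟨hq, harcs, huniq, hroot, hreach⟩ := h
  have key : ∀ v, Relation.ReflTransGen (arcRel T) v q → ¬ Relation.TransGen (arcRel T) v v := by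
    intro v hv
    induction hv using Relation.ReflTransGen.head_induction_on with
    | refl =>
      intro hcyc
      obtain ⟨z, hz, _⟩ := Relation.TransGen.head'_iff.1 hcyc
      exact hroot z hz
    | head hab hbq ih =>
      rename_i a b
      intro hcyc
      obtain ⟨z, hz, hza⟩ := Relation.TransGen.head'_iff.1 hcyc
      have hvX : a ∈ X := (harcs _ hz).1
      have hane : a ≠ q := fun e => hroot _ (e ▸ hab)
      have : z = b := by
        obtain ⟨z0, hz0, hu⟩ := huniq a hvX hane
        rw [hu z hz, hu b hab]
      subst this
      exact ih (Relation.TransGen.tail' (Relation.ReflTransGen.mono (r := arcRel T) (p := arcRel T) (fun _ _ h => h) _ _ hza) hab)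
  intro v hcyc
  have hvX : v ∈ X := by
    obtain ⟨z, hz, _⟩ := Relation.TransGen.head'_iff.1 hcyc
    exact (harcs (v, z) hz).1
  exact key v (hreach v hvX) hcyc

/-- Any two vertices of a rooted tree are connected. -/
lemma tree_conn {X : Finset V} {q u v : V} {T : Finset (V × V)}
    (h : IsRootedTreeOn X q T) (hu : u ∈ X) (hv : v ∈ X) :
    Relation.EqvGen (arcRel T) u v := by
  have l : ∀ x ∈ X, Relation.EqvGen (arcRel T) x q := fun x hx =>
    Relation.ReflTransGen.head_induction_on (h.2.2.2.2 x hx) (Relation.EqvGen.refl q)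
      (fun hab _ ih => Relation.EqvGen.trans _ _ _ (Relation.EqvGen.rel _ _ hab) ih)
  exact Relation.EqvGen.trans _ _ _ (l u hu) (Relation.EqvGen.symm _ _ (l v hv))

lemma conn_mono {A B : Finset (V × V)} (h : A ⊆ B) {u v : V} :
    Conn A u v → Conn B u v :=
  fun hc => Relation.EqvGen.mono (r := arcRel A) (p := arcRel B) (fun _ _ hr => h hr) u v hc

end Helpers
section Part
variable {V : Type*} [Fintype V] [DecidableEq V] {P : Finset (Finset V)} {G : Finset (V × V)}

lemma class_eq (hpart : IsPartitionOn (Finset.univ : Finset V) P) {X X' : Finset V} {v : V}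
    (hX : X ∈ P) (hX' : X' ∈ P) (hv : v ∈ X) (hv' : v ∈ X') : X = X' := by
  obtain ⟨Z, _, hu⟩ := hpart.2 v (Finset.mem_univ v)
  rw [hu X ⟨hX, hv⟩, hu X' ⟨hX', hv'⟩]

noncomputable def classOf (P : Finset (Finset V)) (v : V) : Finset V :=
  if h : ∃ X, X ∈ P ∧ v ∈ X then h.choose else ∅

lemma classOf_spec (hpart : IsPartitionOn (Finset.univ : Finset V) P) (v : V) :
    classOf P v ∈ P ∧ v ∈ classOf P v := by
  obtain ⟨Z, hZ, _⟩ := hpart.2 v (Finset.mem_univ v)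
  have h : ∃ X, X ∈ P ∧ v ∈ X := ⟨Z, hZ⟩
  rw [classOf, dif_pos h]
  exact h.choose_spec

lemma classOf_eq (hpart : IsPartitionOn (Finset.univ : Finset V) P) {X : Finset V} {v : V}
    (hX : X ∈ P) (hv : v ∈ X) : classOf P v = X :=
  class_eq hpart (classOf_spec hpart v).1 hX (classOf_spec hpart v).2 hv

/-- The within-class restriction trees connect classes. -/
lemma class_conn (hpart : IsPartitionOn (Finset.univ : Finset V) P)
    (hdiv : TreeDivisible G P) {X : Finset V} (hX : X ∈ P) {u v : V}
    (hu : u ∈ X) (hv : v ∈ X) : Conn G u v := by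
  obtain ⟨q, ht⟩ := hdiv X hX
  exact conn_mono (Finset.filter_subset _ _) (tree_conn ht hu hv)

lemma mem_splitArcsOf {X Y : Finset V} :
    (X, Y) ∈ splitArcsOf G P ↔ X ∈ P ∧ Y ∈ P ∧ X ≠ Y ∧ ∃ p ∈ G, p.1 ∈ X ∧ p.2 ∈ Y := by
  simp [splitArcsOf, Finset.mem_filter, Finset.mem_product, and_assoc]

/-- Cross arcs leave from the root of the class tree. -/
lemma cross_root (hfun : ∀ v z z' : V, (v, z) ∈ G → (v, z') ∈ G → z = z')
    {X : Finset V} {q : V} (ht : IsRootedTreeOn X q (restrict G X))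
    {p : V × V} (hp : p ∈ G) (h1 : p.1 ∈ X) (h2 : p.2 ∉ X) : p.1 = q := by
  by_contra hne
  obtain ⟨z, hz, _⟩ := ht.2.2.1 p.1 h1 hne
  have hzG : (p.1, z) ∈ G := (Finset.mem_filter.1 hz).1
  have : z = p.2 := hfun p.1 z p.2 hzG hp
  exact h2 (this ▸ ((Finset.mem_filter.1 hz).2.2))

/-- Connectivity correspondence between a tree-divisible forest and its splitting. -/
lemma conn_iff (hpart : IsPartitionOn (Finset.univ : Finset V) P)
    (hdiv : TreeDivisible G P) {u v : V} :
    Conn G u v ↔ Conn (splitArcsOf G P) (classOf P u) (classOf P v) := by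
  constructor
  · intro h
    induction h with
    | rel a b hab =>
      by_cases he : classOf P a = classOf P b
      · rw [he]; exact Relation.EqvGen.refl _
      · refine Relation.EqvGen.rel _ _ ?_
        show (classOf P a, classOf P b) ∈ splitArcsOf G P
        exact mem_splitArcsOf.2 ⟨(classOf_spec hpart a).1, (classOf_spec hpart b).1, he,
          (a, b), hab, (classOf_spec hpart a).2, (classOf_spec hpart b).2⟩
    | refl a => exact Relation.EqvGen.refl _
    | symm a b _ ih => exact Relation.EqvGen.symm _ _ ih
    | trans a b c _ _ ih1 ih2 => exact Relation.EqvGen.trans _ _ _ ih1 ih2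
  · intro h
    have key : ∀ X Y : Finset V, Relation.EqvGen (arcRel (splitArcsOf G P)) X Y →
        X = Y ∨ (X ∈ P ∧ Y ∈ P ∧ ∀ a ∈ X, ∀ b ∈ Y, Conn G a b) := by
      intro X Y h
      induction h with
      | rel X Y hXY =>
        obtain ⟨hX, hY, _, p, hp, h1, h2⟩ := mem_splitArcsOf.1 hXY
        refine Or.inr ⟨hX, hY, fun a ha b hb => ?_⟩
        exact Relation.EqvGen.trans _ _ _ (class_conn hpart hdiv hX ha h1)
          (Relation.EqvGen.trans _ _ _ (Relation.EqvGen.rel _ _ hp) (class_conn hpart hdiv hY h2 hb))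
      | refl X => exact Or.inl rfl
      | symm X Y _ ih =>
        rcases ih with h | ⟨hX, hY, hc⟩
        · exact Or.inl h.symm
        · exact Or.inr ⟨hY, hX, fun a ha b hb => Relation.EqvGen.symm _ _ (hc b hb a ha)⟩
      | trans X Z Y _ _ ih1 ih2 =>
        rcases ih1 with h | ⟨hX, hZ, hc1⟩
        · rwa [h]
        rcases ih2 with h | ⟨_, hY, hc2⟩
        · exact Or.inr ⟨hX, h ▸ hZ, h ▸ hc1⟩
        obtain ⟨z, hz⟩ := (hpart.1 Z hZ).1
        exact Or.inr ⟨hX, hY, fun a ha b hb =>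
          Relation.EqvGen.trans _ _ _ (hc1 a ha z hz) (hc2 z hz b hb)⟩
    rcases key _ _ h with he | ⟨_, _, hc⟩
    · have : v ∈ classOf P u := he ▸ (classOf_spec hpart v).2
      exact class_conn hpart hdiv (classOf_spec hpart u).1 (classOf_spec hpart u).2 this
    · exact hc u (classOf_spec hpart u).2 v (classOf_spec hpart v).2

/-- Components correspondence. -/
lemma components_iff (hpart : IsPartitionOn (Finset.univ : Finset V) P)
    (hdiv : TreeDivisible G P) {k : ℕ} :
    HasKComponentsOn (Finset.univ : Finset V) G k ↔ HasKComponentsOn P (splitArcsOf G P) k := by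
  constructor
  · rintro ⟨reps, _, hcard, huniq⟩
    refine ⟨reps.image (classOf P), ?_, ?_, ?_⟩
    · intro X hX
      obtain ⟨u, _, rfl⟩ := Finset.mem_image.1 hX
      exact (classOf_spec hpart u).1
    · rw [Finset.card_image_of_injOn, hcard]
      intro a ha b hb he
      have hconn : Conn G a b := by
        have : a ∈ classOf P b := he ▸ (classOf_spec hpart a).2
        exact class_conn hpart hdiv (classOf_spec hpart b).1 this (classOf_spec hpart b).2
      obtain ⟨z, hz1, hz2⟩ := huniq a (Finset.mem_univ a)
      rw [hz2 a ⟨ha, Relation.EqvGen.refl _⟩, hz2 b ⟨hb, hconn⟩]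
    · intro X hX
      obtain ⟨x, hx⟩ := (hpart.1 X hX).1
      obtain ⟨z, ⟨hz1, hz2⟩, hz3⟩ := huniq x (Finset.mem_univ x)
      refine ⟨classOf P z, ⟨Finset.mem_image_of_mem _ hz1, ?_⟩, ?_⟩
      · rw [← classOf_eq hpart hX hx]; exact (conn_iff hpart hdiv).1 hz2
      · rintro W ⟨hW, hWc⟩
        obtain ⟨z', hz', rfl⟩ := Finset.mem_image.1 hW
        have : Conn G x z' := by
          rw [conn_iff hpart hdiv, classOf_eq hpart hX hx]
          exact hWc
        rw [hz3 z' ⟨hz', this⟩]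
  · rintro ⟨reps', hsub, hcard, huniq⟩
    have hne : ∀ X : {X // X ∈ reps'}, X.1.Nonempty := fun X => (hpart.1 X.1 (hsub X.2)).1
    set f : {X // X ∈ reps'} → V := fun X => (hne X).choose with hf
    have hfmem : ∀ X, f X ∈ X.1 := fun X => (hne X).choose_spec
    refine ⟨reps'.attach.image f, fun _ _ => Finset.mem_univ _, ?_, ?_⟩
    · rw [Finset.card_image_of_injective, Finset.card_attach, hcard]
      · intro a b he
        have : a.1 = b.1 := class_eq hpart (hsub a.2) (hsub b.2) (hfmem a) (he ▸ hfmem b)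
        exact Subtype.ext this
    · intro v _
      obtain ⟨W, ⟨hW1, hW2⟩, hW3⟩ := huniq (classOf P v) (classOf_spec hpart v).1
      refine ⟨f ⟨W, hW1⟩, ⟨Finset.mem_image_of_mem _ (Finset.mem_attach _ _), ?_⟩, ?_⟩
      · rw [conn_iff hpart hdiv (u := v), classOf_eq hpart (hsub hW1) (hfmem ⟨W, hW1⟩)]
        exact hW2
      · rintro u ⟨hu, huc⟩
        obtain ⟨⟨W', hW'⟩, _, rfl⟩ := Finset.mem_image.1 hu
        have : Conn (splitArcsOf G P) (classOf P v) W' := by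
          have := (conn_iff hpart hdiv).1 huc
          rwa [classOf_eq hpart (hsub hW') (hfmem ⟨W', hW'⟩)] at this
        have : W' = W := hW3 W' ⟨hW', this⟩
        subst this; rfl
end Part
section Decomp
variable {V : Type*} [Fintype V] [DecidableEq V] {w : V → V → ℝ}
  {AΨ G : Finset (V × V)} {P : Finset (Finset V)}

set_option linter.unusedSectionVars false

/-- Fiber decomposition of the total weight. -/
lemma totW_fiber (hpart : IsPartitionOn (Finset.univ : Finset V) P) :
    totW w G = ∑ X ∈ P, ∑ p ∈ G.filter (fun p => p.1 ∈ X), w p.1 p.2 := by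
  rw [totW, ← Finset.sum_fiberwise_of_maps_to (g := fun p : V × V => classOf P p.1)
    (fun p _ => (classOf_spec hpart p.1).1)]
  refine Finset.sum_congr rfl fun X hX => Finset.sum_congr ?_ fun _ _ => rfl
  apply Finset.filter_congr
  intro p _
  constructor
  · rintro rfl; exact (classOf_spec hpart p.1).2
  · intro h; simp [classOf_eq hpart hX h]

/-- In a tree-divisible forest, the fiber of a class is the class tree plus at most one
cross arc from the root; bounds follow. -/
lemma fiber_bound (hpart : IsPartitionOn (Finset.univ : Finset V) P)
    (hGsub : G ⊆ AΨ) (hfun : ∀ v z z' : V, (v, z) ∈ G → (v, z') ∈ G → z = z')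
    {X : Finset V} (hX : X ∈ P) {q : V} (ht : IsRootedTreeOn X q (restrict G X)) :
    (∀ Y, (X, Y) ∈ splitArcsOf G P →
      lamXY w AΨ X Y ≤ ∑ p ∈ G.filter (fun p => p.1 ∈ X), w p.1 p.2) ∧
    ((∀ Y, (X, Y) ∉ splitArcsOf G P) →
      lamB w AΨ X ≤ ∑ p ∈ G.filter (fun p => p.1 ∈ X), w p.1 p.2) := by
  set T := restrict G X with hT
  set F := G.filter (fun p => p.1 ∈ X) with hF
  have hTF : T ⊆ F := by
    intro p hp
    have h' := Finset.mem_filter.1 (show p ∈ G.filter (fun p => p.1 ∈ X ∧ p.2 ∈ X) from hp)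
    exact Finset.mem_filter.2 ⟨h'.1, h'.2.1⟩
  have hTsub : T ⊆ AΨ := fun p hp => hGsub (Finset.mem_filter.1 hp).1
  have hcross : ∀ p ∈ F, p ∉ T → p.1 = q ∧ p.2 ∉ X := by
    intro p hp hpt
    have hpG : p ∈ G := (Finset.mem_filter.1 hp).1
    have hp1 : p.1 ∈ X := (Finset.mem_filter.1 hp).2
    have h2 : p.2 ∉ X := by
      intro h2
      exact hpt (Finset.mem_filter.2 ⟨hpG, hp1, h2⟩)
    exact ⟨cross_root hfun ht hpG hp1 h2, h2⟩
  constructor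
  · intro Y hXY
    obtain ⟨_, hY, hne, p0, hp0, hp01, hp02⟩ := mem_splitArcsOf.1 hXY
    have hp02X : p0.2 ∉ X := fun h => hne (class_eq hpart hX hY h hp02)
    have hq : p0.1 = q := cross_root hfun ht hp0 hp01 hp02X
    have hp0T : p0 ∉ T := fun h => hp02X (Finset.mem_filter.1 h).2.2
    have hFeq : F = insert p0 T := by
      apply Finset.Subset.antisymm
      · intro p hp
        by_cases hpt : p ∈ T
        · exact Finset.mem_insert_of_mem hpt
        · obtain ⟨h1, h2⟩ := hcross p hp hpt
          have : p.2 = p0.2 := hfun q p.2 p0.2 (h1 ▸ (Finset.mem_filter.1 hp).1)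
            (hq ▸ hp0)
          have : p = p0 := Prod.ext (h1.trans hq.symm) this
          exact this ▸ Finset.mem_insert_self _ _
      · intro p hp
        rcases Finset.mem_insert.1 hp with rfl | hp
        · exact Finset.mem_filter.2 ⟨hp0, hp01⟩
        · exact hTF hp
    have : ∑ p ∈ F, w p.1 p.2 = totW w T + w q p0.2 := by
      rw [hFeq, Finset.sum_insert hp0T, totW, hq]
      ring
    rw [this]
    exact lamXY_le ht hTsub hp02 (hq ▸ hGsub hp0)
  · intro hno
    have hFeq : F = T := by
      apply Finset.Subset.antisymm _ hTF
      intro p hp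
      by_contra hpt
      obtain ⟨h1, h2⟩ := hcross p hp hpt
      have hp2 : p.2 ∈ classOf P p.2 := (classOf_spec hpart p.2).2
      refine hno (classOf P p.2) (mem_splitArcsOf.2 ⟨hX, (classOf_spec hpart p.2).1, ?_,
        p, (Finset.mem_filter.1 hp).1, (Finset.mem_filter.1 hp).2, hp2⟩)
      intro he
      exact h2 (he ▸ hp2)
    rw [hFeq]
    exact lamB_le ht hTsub

/-- First components of distinct split arcs are distinct. -/
lemma split_fst_inj (hpart : IsPartitionOn (Finset.univ : Finset V) P)
    (hfun : ∀ v z z' : V, (v, z) ∈ G → (v, z') ∈ G → z = z')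
    (hdiv : TreeDivisible G P) {X Y Y' : Finset V}
    (h1 : (X, Y) ∈ splitArcsOf G P) (h2 : (X, Y') ∈ splitArcsOf G P) : Y = Y' := by
  obtain ⟨hX, hY, hne, p, hp, hp1, hp2⟩ := mem_splitArcsOf.1 h1
  obtain ⟨_, hY', hne', p', hp', hp1', hp2'⟩ := mem_splitArcsOf.1 h2
  obtain ⟨q, ht⟩ := hdiv X hX
  have e1 : p.1 = q := cross_root hfun ht hp hp1 (fun h => hne (class_eq hpart hX hY h hp2))
  have e2 : p'.1 = q := cross_root hfun ht hp' hp1' (fun h => hne' (class_eq hpart hX hY' h hp2'))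
  have : p.2 = p'.2 := hfun q _ _ (e1 ▸ hp) (e2 ▸ hp')
  exact class_eq hpart hY hY' (this ▸ hp2) hp2'

/-- The splitting of a tree-divisible subforest of `Ψ` consists of split arcs of `Ψ`. -/
lemma split_sub_psi (hpart : IsPartitionOn (Finset.univ : Finset V) P)
    (hGsub : G ⊆ AΨ) (hfun : ∀ v z z' : V, (v, z) ∈ G → (v, z') ∈ G → z = z')
    (hdiv : TreeDivisible G P) : ↑(splitArcsOf G P) ⊆ psiSplitArcs AΨ P := by
  rintro ⟨X, Y⟩ h
  obtain ⟨hX, hY, hne, p, hp, hp1, hp2⟩ := mem_splitArcsOf.1 h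
  obtain ⟨q, ht⟩ := hdiv X hX
  have e1 : p.1 = q := cross_root hfun ht hp hp1 (fun h => hne (class_eq hpart hX hY h hp2))
  exact ⟨hX, hY, hne, q, restrict G X, ht,
    fun a ha => hGsub (Finset.mem_filter.1 ha).1, p.2, hp2, e1 ▸ hGsub hp⟩

/-- Splitting of a forest is acyclic. -/
lemma split_acyclic (hpart : IsPartitionOn (Finset.univ : Finset V) P)
    (hdiv : TreeDivisible G P)
    (hacyc : ∀ v : V, ¬ Relation.TransGen (arcRel G) v v)
    (hfun : ∀ v z z' : V, (v, z) ∈ G → (v, z') ∈ G → z = z') :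
    ∀ X, ¬ Relation.TransGen (arcRel (splitArcsOf G P)) X X := by
  have step : ∀ X Y : Finset V, (X, Y) ∈ splitArcsOf G P → ∀ u ∈ X,
      Relation.TransGen (arcRel G) u u → False := fun _ _ _ _ _ h => hacyc _ h
  have lift : ∀ X Y : Finset V, (X, Y) ∈ splitArcsOf G P → ∀ u ∈ X,
      ∃ v ∈ Y, Relation.TransGen (arcRel G) u v := by
    intro X Y hXY u hu
    obtain ⟨hX, hY, hne, p, hp, hp1, hp2⟩ := mem_splitArcsOf.1 hXY
    obtain ⟨q, ht⟩ := hdiv X hX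
    have e1 : p.1 = q := cross_root hfun ht hp hp1 (fun h => hne (class_eq hpart hX hY h hp2))
    have hreach : Relation.ReflTransGen (arcRel G) u q :=
      Relation.ReflTransGen.mono (r := arcRel (restrict G X)) (p := arcRel G) (fun a b h => (Finset.mem_filter.1 h).1) _ _ (ht.2.2.2.2 u hu)
    exact ⟨p.2, hp2, Relation.TransGen.tail' hreach (show arcRel G q p.2 from e1 ▸ hp)⟩
  have claim : ∀ X Y : Finset V, Relation.TransGen (arcRel (splitArcsOf G P)) X Y →
      ∀ u ∈ X, ∃ v ∈ Y, Relation.TransGen (arcRel G) u v := by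
    intro X Y h
    induction h with
    | single hXZ => exact lift _ _ hXZ
    | tail _ hZY ih =>
      intro u hu
      obtain ⟨v, hv, huv⟩ := ih u hu
      obtain ⟨v', hv', hvv'⟩ := lift _ _ hZY v hv
      exact ⟨v', hv', huv.trans hvv'⟩
  intro X hcyc
  have hX : X ∈ P := by
    obtain ⟨Z, hZ, _⟩ := Relation.TransGen.head'_iff.1 hcyc
    exact (mem_splitArcsOf.1 hZ).1
  obtain ⟨q, ht⟩ := hdiv X hX
  obtain ⟨v, hv, hqv⟩ := claim X X hcyc q ht.1
  have : Relation.ReflTransGen (arcRel G) v q :=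
    Relation.ReflTransGen.mono (r := arcRel (restrict G X)) (p := arcRel G) (fun a b h => (Finset.mem_filter.1 h).1) _ _ (ht.2.2.2.2 v hv)
  exact hacyc q (hqv.trans_left this)
end Decomp
section Lower
variable {V : Type*} [Fintype V] [DecidableEq V] {w : V → V → ℝ}
  {AΨ G : Finset (V × V)} {P : Finset (Finset V)}

set_option linter.unusedSectionVars false

/-- Lower bound: any tree-divisible subforest weighs at least the λ-decomposition of
its splitting. -/
lemma principal_lower (hpart : IsPartitionOn (Finset.univ : Finset V) P)
    (hGsub : G ⊆ AΨ) (hGfor : IsEnteringForestOn (Finset.univ : Finset V) G)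
    (hdiv : TreeDivisible G P) :
    ∑ Q ∈ splitArcsOf G P, lamXY w AΨ Q.1 Q.2 +
      ∑ X ∈ P \ (splitArcsOf G P).image Prod.fst, lamB w AΨ X ≤ totW w G := by
  classical
  set S : Finset V → ℝ := fun X => ∑ p ∈ G.filter (fun p => p.1 ∈ X), w p.1 p.2 with hS
  set tails := (splitArcsOf G P).image Prod.fst with htails
  have htsub : tails ⊆ P := by
    intro X hX
    obtain ⟨Q, hQ, rfl⟩ := Finset.mem_image.1 hX
    have := (Finset.mem_filter.1 hQ).1
    exact (Finset.mem_product.1 this).1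
  have hinj : ∀ Q ∈ splitArcsOf G P, ∀ Q' ∈ splitArcsOf G P, Q.1 = Q'.1 → Q = Q' := by
    rintro ⟨X, Y⟩ h ⟨X', Y'⟩ h' (he : X = X')
    subst he
    exact Prod.ext rfl (split_fst_inj hpart hGfor.2.1 hdiv h h')
  have h1 : ∑ Q ∈ splitArcsOf G P, lamXY w AΨ Q.1 Q.2 ≤ ∑ X ∈ tails, S X := by
    rw [htails, Finset.sum_image hinj]
    refine Finset.sum_le_sum ?_
    rintro ⟨X, Y⟩ hQ
    have hX : X ∈ P := (Finset.mem_product.1 (Finset.mem_filter.1 hQ).1).1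
    obtain ⟨q, ht⟩ := hdiv X hX
    exact (fiber_bound hpart hGsub hGfor.2.1 hX ht).1 Y hQ
  have h2 : ∑ X ∈ P \ tails, lamB w AΨ X ≤ ∑ X ∈ P \ tails, S X := by
    refine Finset.sum_le_sum ?_
    intro X hX
    obtain ⟨hXP, hXnt⟩ := Finset.mem_sdiff.1 hX
    obtain ⟨q, ht⟩ := hdiv X hXP
    refine (fiber_bound hpart hGsub hGfor.2.1 hXP ht).2 ?_
    intro Y hY
    exact hXnt (Finset.mem_image_of_mem Prod.fst hY)
  have hsum : ∑ X ∈ tails, S X + ∑ X ∈ P \ tails, S X = totW w G := by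
    rw [add_comm, Finset.sum_sdiff htsub, ← totW_fiber hpart]
  linarith

/-- Rearranging the two forms of the objective. -/
lemma sum_rearrange {G' : Finset (Finset V × Finset V)}
    (hfst : ∀ Q ∈ G', ∀ Q' ∈ G', Prod.fst Q = Prod.fst Q' → Q = Q')
    (htsub : G'.image Prod.fst ⊆ P) :
    ∑ Q ∈ G', (lamXY w AΨ Q.1 Q.2 - lamB w AΨ Q.1) =
      (∑ Q ∈ G', lamXY w AΨ Q.1 Q.2 + ∑ X ∈ P \ G'.image Prod.fst, lamB w AΨ X) -
        ∑ X ∈ P, lamB w AΨ X := by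
  have h1 : ∑ Q ∈ G', lamB w AΨ Q.1 = ∑ X ∈ G'.image Prod.fst, lamB w AΨ X := by
    rw [Finset.sum_image hfst]
  have h2 : ∑ X ∈ P \ G'.image Prod.fst, lamB w AΨ X + ∑ X ∈ G'.image Prod.fst, lamB w AΨ X
      = ∑ X ∈ P, lamB w AΨ X := Finset.sum_sdiff htsub
  rw [Finset.sum_sub_distrib, h1]
  linarith
end Lower
section Glue
variable {V : Type*} [Fintype V] [DecidableEq V] {w : V → V → ℝ}
  {AΨ G : Finset (V × V)} {P : Finset (Finset V)}

set_option linter.unusedSectionVars false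

/-- If the class trees are acyclic and the splitting is acyclic, the glued forest is
acyclic. -/
lemma glue_acyclic (hpart : IsPartitionOn (Finset.univ : Finset V) P)
    (hdiv : TreeDivisible G P)
    (hsplit : ∀ X, ¬ Relation.TransGen (arcRel (splitArcsOf G P)) X X) :
    ∀ v, ¬ Relation.TransGen (arcRel G) v v := by
  have claim : ∀ a b : V, Relation.TransGen (arcRel G) a b →
      (classOf P a = classOf P b ∧
        Relation.TransGen (arcRel (restrict G (classOf P a))) a b) ∨
      Relation.TransGen (arcRel (splitArcsOf G P)) (classOf P a) (classOf P b) := by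
    have onearc : ∀ a b : V, arcRel G a b →
        (classOf P a = classOf P b ∧ arcRel (restrict G (classOf P a)) a b) ∨
        arcRel (splitArcsOf G P) (classOf P a) (classOf P b) := by
      intro a b hab
      by_cases he : classOf P a = classOf P b
      · refine Or.inl ⟨he, ?_⟩
        exact Finset.mem_filter.2 ⟨hab, (classOf_spec hpart a).2, he ▸ (classOf_spec hpart b).2⟩
      · exact Or.inr (mem_splitArcsOf.2 ⟨(classOf_spec hpart a).1, (classOf_spec hpart b).1,
          he, (a, b), hab, (classOf_spec hpart a).2, (classOf_spec hpart b).2⟩)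
    intro a b h
    induction h with
    | single hab =>
      rcases onearc _ _ hab with ⟨he, harc⟩ | harc
      · exact Or.inl ⟨he, Relation.TransGen.single harc⟩
      · exact Or.inr (Relation.TransGen.single harc)
    | tail _ hbc ih =>
      rename_i b c _
      rcases onearc _ _ hbc with ⟨he2, harc2⟩ | harc2
      · rcases ih with ⟨he1, h1⟩ | h1
        · exact Or.inl ⟨he1.trans he2, h1.tail (he1 ▸ harc2)⟩
        · exact Or.inr (he2 ▸ h1)
      · rcases ih with ⟨he1, _⟩ | h1
        · exact Or.inr (he1 ▸ Relation.TransGen.single harc2)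
        · exact Or.inr (h1.tail harc2)
  intro v hcyc
  rcases claim v v hcyc with ⟨_, h1⟩ | h1
  · obtain ⟨q, ht⟩ := hdiv (classOf P v) (classOf_spec hpart v).1
    exact tree_acyclic ht v h1
  · exact hsplit _ h1

/-- Construction of a minimal principal for a spanning forest of the splitting
digraph, together with its weight. -/
lemma construct (hpart : IsPartitionOn (Finset.univ : Finset V) P)
    (hΨdiv : PsiDivisible AΨ P) {G' : Finset (Finset V × Finset V)}
    (hG'sub : ↑G' ⊆ psiSplitArcs AΨ P) (hG'for : IsEnteringForestOn P G') :
    ∃ G : Finset (V × V), IsPrincipal AΨ P G' G ∧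
      totW w G = ∑ Q ∈ G', lamXY w AΨ Q.1 Q.2 +
        ∑ X ∈ P \ G'.image Prod.fst, lamB w AΨ X := by
  classical
  have hBex : ∀ X, X ∈ P → ∃ (B : Finset (V × V)) (q : V) (T : Finset (V × V)),
      B ⊆ AΨ ∧ (∀ p ∈ B, p.1 ∈ X) ∧ IsRootedTreeOn X q T ∧ T ⊆ B ∧
      (∀ p ∈ B, p ∉ T → p.1 = q ∧ p.2 ∉ X) ∧ (∀ p ∈ B, p ∉ T → ∀ p' ∈ B, p' ∉ T → p = p') ∧
      ((X ∉ G'.image Prod.fst ∧ B = T ∧ totW w B = lamB w AΨ X) ∨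
       (∃ Y r, (X, Y) ∈ G' ∧ r ∈ Y ∧ B = insert (q, r) T ∧
         totW w B = lamXY w AΨ X Y)) := by
    intro X hX
    by_cases hc : X ∈ G'.image Prod.fst
    · obtain ⟨Q, hQ, rfl⟩ := Finset.mem_image.1 hc
      have hQ' : (Q.1, Q.2) ∈ G' := hQ
      obtain ⟨hXP, hY, hne, q0, A0, ht0, hs0, r0, hr0, ha0⟩ := hG'sub hQ
      obtain ⟨q, T, r, ht, hs, hr, ha, hw⟩ :=
        lamXY_attain (w := w) ⟨q0, A0, r0, ht0, hs0, hr0, ha0⟩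
      have hqrT : (q, r) ∉ T := ht.2.2.2.1 r
      have hrX : r ∉ Q.1 := by
        intro hrX
        exact hne (class_eq hpart hXP hY hrX hr)
      refine ⟨insert (q, r) T, q, T, ?_, ?_, ht, Finset.subset_insert _ _, ?_, ?_, Or.inr
        ⟨Q.2, r, hQ', hr, rfl, ?_⟩⟩
      · exact Finset.insert_subset ha hs
      · intro p hp
        rcases Finset.mem_insert.1 hp with rfl | hp
        · exact ht.1
        · exact (ht.2.1 p hp).1
      · intro p hp hpT
        rcases Finset.mem_insert.1 hp with rfl | hp
        · exact ⟨rfl, hrX⟩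
        · exact absurd hp hpT
      · intro p hp hpT p' hp' hpT'
        rcases Finset.mem_insert.1 hp with rfl | hp
        · rcases Finset.mem_insert.1 hp' with rfl | hp'
          · rfl
          · exact absurd hp' hpT'
        · exact absurd hp hpT
      · have he : totW w (insert (q, r) T) = w q r + totW w T := by
          rw [totW, Finset.sum_insert hqrT]; rfl
        rw [he, ← hw]; ring
    · obtain ⟨q0, A0, ht0, hs0⟩ := hΨdiv X hX
      obtain ⟨q, T, ht, hs, hw⟩ := lamB_attain (w := w) ⟨q0, A0, ht0, hs0⟩
      exact ⟨T, q, T, hs, fun p hp => (ht.2.1 p hp).1, ht, le_refl T,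
        fun p hp hpT => absurd hp hpT, fun p hp hpT => absurd hp hpT,
        Or.inl ⟨hc, rfl, hw⟩⟩
  choose B q T hsub htail htree hTB hcross hucross hdisj using hBex
  set G : Finset (V × V) := P.attach.biUnion (fun X => B X.1 X.2) with hG
  have memG : ∀ p : V × V, p ∈ G ↔ ∃ (X : Finset V) (hX : X ∈ P), p ∈ B X hX := by
    intro p
    constructor
    · intro h
      obtain ⟨X, _, hp⟩ := Finset.mem_biUnion.1 h
      exact ⟨X.1, X.2, hp⟩
    · rintro ⟨X, hX, hp⟩
      exact Finset.mem_biUnion.2 ⟨⟨X, hX⟩, Finset.mem_attach _ _, hp⟩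
  have hGsub : G ⊆ AΨ := by
    intro p hp
    obtain ⟨X, hX, hp⟩ := (memG p).1 hp
    exact hsub X hX hp
  have hrestr : ∀ (X : Finset V) (hX : X ∈ P), restrict G X = T X hX := by
    intro X hX
    ext p
    constructor
    · intro hp
      obtain ⟨hpG, hp1, hp2⟩ := Finset.mem_filter.1
        (show p ∈ G.filter (fun p => p.1 ∈ X ∧ p.2 ∈ X) from hp)
      obtain ⟨W, hW, hpB⟩ := (memG p).1 hpG
      have : W = X := class_eq hpart hW hX (htail W hW p hpB) hp1
      subst this
      by_contra hpT
      exact (hcross W hW p hpB hpT).2 hp2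
    · intro hp
      refine Finset.mem_filter.2 ⟨(memG p).2 ⟨X, hX, hTB X hX hp⟩, ?_, ?_⟩
      · exact ((htree X hX).2.1 p hp).1
      · exact ((htree X hX).2.1 p hp).2
  have hdivG : TreeDivisible G P := fun X hX => ⟨q X hX, (hrestr X hX) ▸ htree X hX⟩
  have hfunG : ∀ v z z' : V, (v, z) ∈ G → (v, z') ∈ G → z = z' := by
    intro v z z' h1 h2
    obtain ⟨W1, hW1, hB1⟩ := (memG _).1 h1
    obtain ⟨W2, hW2, hB2⟩ := (memG _).1 h2
    have hvW : W1 = W2 := class_eq hpart hW1 hW2 (htail W1 hW1 (v, z) hB1) (htail W2 hW2 (v, z') hB2)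
    subst hvW
    by_cases hT1 : (v, z) ∈ T W1 hW1 <;> by_cases hT2 : (v, z') ∈ T W1 hW1
    · have hvW1 : v ∈ W1 := ((htree W1 hW1).2.1 _ hT1).1
      have hvq : v ≠ q W1 hW1 := by
        rintro rfl
        exact (htree W1 hW1).2.2.2.1 z hT1
      obtain ⟨z0, _, hu⟩ := (htree W1 hW1).2.2.1 v hvW1 hvq
      rw [hu z hT1, hu z' hT2]
    · have := (hcross W1 hW1 _ hB2 hT2).1
      subst this
      exact absurd hT1 ((htree W1 hW1).2.2.2.1 z)
    · have := (hcross W1 hW1 _ hB1 hT1).1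
      subst this
      exact absurd hT2 ((htree W1 hW1).2.2.2.1 z')
    · have := hucross W1 hW1 _ hB1 hT1 _ hB2 hT2
      exact (Prod.ext_iff.1 this).2
  have hsplitG : splitArcsOf G P = G' := by
    ext Q
    obtain ⟨X, Y⟩ := Q
    constructor
    · intro h
      obtain ⟨hX, hY, hne, p, hp, hp1, hp2⟩ := mem_splitArcsOf.1 h
      obtain ⟨W, hW, hpB⟩ := (memG p).1 hp
      have : W = X := class_eq hpart hW hX (htail W hW p hpB) hp1
      subst this
      have hpT : p ∉ T W hW := by
        intro hpT
        exact hne (class_eq hpart hX hY ((htree W hW).2.1 p hpT).2 hp2)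
      rcases hdisj W hW with ⟨_, hBT, _⟩ | ⟨Y', r, hY'G, hr, hBeq, _⟩
      · exact absurd (hBT ▸ hpB) hpT
      · have hpe : p = (q W hW, r) := by
          rcases Finset.mem_insert.1 (hBeq ▸ hpB) with h | h
          · exact h
          · exact absurd h hpT
      
        have hY'P : Y' ∈ P := (hG'sub hY'G).2.1
        have : Y = Y' := class_eq hpart hY hY'P (by rw [hpe] at hp2; exact hp2) hr
        exact this ▸ hY'G
    · intro hQ
      have hX : X ∈ P := (hG'sub hQ).1
      have hY : Y ∈ P := (hG'sub hQ).2.1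
      have hne : X ≠ Y := (hG'sub hQ).2.2.1
      rcases hdisj X hX with ⟨hnt, _, _⟩ | ⟨Y', r, hY'G, hr, hBeq, _⟩
      · exact absurd (Finset.mem_image.2 ⟨(X, Y), hQ, rfl⟩) hnt
      · have : Y' = Y := hG'for.2.1 X Y' Y hY'G hQ
        subst this
        refine mem_splitArcsOf.2 ⟨hX, hY, hne, (q X hX, r), ?_, (htree X hX).1, hr⟩
        exact (memG _).2 ⟨X, hX, hBeq ▸ Finset.mem_insert_self _ _⟩
  have hacycG : ∀ v, ¬ Relation.TransGen (arcRel G) v v :=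
    glue_acyclic hpart hdivG (hsplitG ▸ hG'for.2.2)
  have hforG : IsEnteringForestOn (Finset.univ : Finset V) G :=
    ⟨fun p _ => ⟨Finset.mem_univ _, Finset.mem_univ _⟩, hfunG, hacycG⟩
  refine ⟨G, ⟨hGsub, hforG, hdivG, hsplitG⟩, ?_⟩
  -- weight computation
  have hpd : ∀ x ∈ P.attach, ∀ y ∈ P.attach, x ≠ y →
      Disjoint (B x.1 x.2) (B y.1 y.2) := by
    intro x _ y _ hxy
    rw [Finset.disjoint_left]
    intro p hp hp'
    exact hxy (Subtype.ext
      (class_eq hpart x.2 y.2 (htail x.1 x.2 p hp) (htail y.1 y.2 p hp')))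
  have hsum1 : totW w G = ∑ x ∈ P.attach, totW w (B x.1 x.2) := by
    rw [totW, hG, Finset.sum_biUnion hpd]
    rfl
  set v : Finset V → ℝ := fun X =>
    if h : ∃ Y, (X, Y) ∈ G' then lamXY w AΨ X h.choose else lamB w AΨ X with hv
  have hval : ∀ (X : Finset V) (hX : X ∈ P), totW w (B X hX) = v X := by
    intro X hX
    rcases hdisj X hX with ⟨hnt, _, hw⟩ | ⟨Y, r, hYG, _, _, hw⟩
    · have hno : ¬ ∃ Y, (X, Y) ∈ G' := by
        rintro ⟨Y, hY⟩
        exact hnt (Finset.mem_image.2 ⟨(X, Y), hY, rfl⟩)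
      rw [hw, hv]
      simp [dif_neg hno]
    · have hex : ∃ Y, (X, Y) ∈ G' := ⟨Y, hYG⟩
      have : hex.choose = Y := hG'for.2.1 X hex.choose Y hex.choose_spec hYG
      rw [hw, hv]
      simp only [dif_pos hex, this]
  have hsum2 : ∑ x ∈ P.attach, totW w (B x.1 x.2) = ∑ X ∈ P, v X := by
    rw [← Finset.sum_attach P v]
    exact Finset.sum_congr rfl fun x _ => hval x.1 x.2
  have htsub : G'.image Prod.fst ⊆ P := by
    intro X hX
    obtain ⟨Q, hQ, rfl⟩ := Finset.mem_image.1 hX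
    exact (hG'sub hQ).1
  have hfst : ∀ Q ∈ G', ∀ Q' ∈ G', Prod.fst Q = Prod.fst Q' → Q = Q' := by
    rintro ⟨X, Y⟩ h ⟨X', Y'⟩ h' (he : X = X')
    subst he
    exact Prod.ext rfl (hG'for.2.1 X Y Y' h h')
  have hsum3 : ∑ X ∈ P, v X = ∑ Q ∈ G', lamXY w AΨ Q.1 Q.2 +
      ∑ X ∈ P \ G'.image Prod.fst, lamB w AΨ X := by
    rw [← Finset.sum_sdiff htsub]
    have e1 : ∑ X ∈ G'.image Prod.fst, v X = ∑ Q ∈ G', lamXY w AΨ Q.1 Q.2 := by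
      rw [Finset.sum_image hfst]
      refine Finset.sum_congr rfl ?_
      intro Q hQ
      have hex : ∃ Y, (Q.1, Y) ∈ G' := ⟨Q.2, hQ⟩
      have : hex.choose = Q.2 := hG'for.2.1 Q.1 hex.choose Q.2 hex.choose_spec hQ
      rw [hv]
      simp only [dif_pos hex, this]
    have e2 : ∑ X ∈ P \ G'.image Prod.fst, v X = ∑ X ∈ P \ G'.image Prod.fst, lamB w AΨ X := by
      refine Finset.sum_congr rfl ?_
      intro X hX
      have hno : ¬ ∃ Y, (X, Y) ∈ G' := by
        rintro ⟨Y, hY⟩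
        exact (Finset.mem_sdiff.1 hX).2 (Finset.mem_image.2 ⟨(X, Y), hY, rfl⟩)
      rw [hv]
      simp [dif_neg hno]
    rw [e1, e2]
    ring
  rw [hsum1, hsum2, hsum3]
end Glue
/-- for a minimal principal `F` of `F'` one has
`Υ^{F'} = Υ^F − Σ_{Y ∈ ℵ} λ^•_Y`; consequently, `F` is minimal among tree-divisible
`k`-component spanning forests of `Ψ` iff `F'` is minimal among `k`-component spanning
forests of `Ψ|ℵ`. -/
theorem stmt17 {V : Type*} [Fintype V] [DecidableEq V] (w : V → V → ℝ)
    (AΨ : Finset (V × V)) (P : Finset (Finset V)) (k : ℕ)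
    (hpart : IsPartitionOn (Finset.univ : Finset V) P)
    (hΨdiv : PsiDivisible AΨ P)
    (F' : Finset (Finset V × Finset V)) (hF'sub : ↑F' ⊆ psiSplitArcs AΨ P)
    (hF' : IsEnteringForestOn P F') (hF'k : HasKComponentsOn P F' k)
    (AF : Finset (V × V)) (hprin : IsPrincipal AΨ P F' AF)
    (hmin : ∀ G : Finset (V × V), IsPrincipal AΨ P F' G → totW w AF ≤ totW w G) :
    (∑ Q ∈ F', (lamXY w AΨ Q.1 Q.2 - lamB w AΨ Q.1)) =
        totW w AF - ∑ Y ∈ P, lamB w AΨ Y ∧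
      ((∀ G : Finset (V × V), G ⊆ AΨ →
          IsEnteringForestOn (Finset.univ : Finset V) G →
          HasKComponentsOn (Finset.univ : Finset V) G k →
          TreeDivisible G P → totW w AF ≤ totW w G) ↔
        (∀ G' : Finset (Finset V × Finset V), ↑G' ⊆ psiSplitArcs AΨ P →
          IsEnteringForestOn P G' → HasKComponentsOn P G' k →
          (∑ Q ∈ F', (lamXY w AΨ Q.1 Q.2 - lamB w AΨ Q.1)) ≤
            ∑ Q ∈ G', (lamXY w AΨ Q.1 Q.2 - lamB w AΨ Q.1))) := by

  classical
  have hsplitAF : splitArcsOf AF P = F' := hprin.2.2.2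
  have hfstF' : ∀ Q ∈ F', ∀ Q' ∈ F', Prod.fst Q = Prod.fst Q' → Q = Q' := by
    rintro ⟨X, Y⟩ h ⟨X', Y'⟩ h' (he : X = X')
    subst he
    exact Prod.ext rfl (hF'.2.1 X Y Y' h h')
  have htsubF' : F'.image Prod.fst ⊆ P := by
    intro X hX
    obtain ⟨Q, hQ, rfl⟩ := Finset.mem_image.1 hX
    exact (hF'.1 Q hQ).1
  -- Part 1 : the weight formula
  have hlow : ∑ Q ∈ F', lamXY w AΨ Q.1 Q.2 +
      ∑ X ∈ P \ F'.image Prod.fst, lamB w AΨ X ≤ totW w AF := by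
    have := principal_lower (w := w) hpart hprin.1 hprin.2.1 hprin.2.2.1
    rwa [hsplitAF] at this
  obtain ⟨G0, hG0prin, hG0w⟩ := construct (w := w) hpart hΨdiv hF'sub hF'
  have hup : totW w AF ≤ ∑ Q ∈ F', lamXY w AΨ Q.1 Q.2 +
      ∑ X ∈ P \ F'.image Prod.fst, lamB w AΨ X := hG0w ▸ hmin G0 hG0prin
  have hAFeq : totW w AF = ∑ Q ∈ F', lamXY w AΨ Q.1 Q.2 +
      ∑ X ∈ P \ F'.image Prod.fst, lamB w AΨ X := le_antisymm hup hlow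
  have part1 : (∑ Q ∈ F', (lamXY w AΨ Q.1 Q.2 - lamB w AΨ Q.1)) =
      totW w AF - ∑ Y ∈ P, lamB w AΨ Y := by
    rw [sum_rearrange (w := w) (AΨ := AΨ) hfstF' htsubF', ← hAFeq]
  refine ⟨part1, ?_, ?_⟩
  · -- forward direction
    intro hminAll G' hG'sub2 hG'for2 hG'k2
    obtain ⟨G1, hG1prin, hG1w⟩ := construct (w := w) hpart hΨdiv hG'sub2 hG'for2
    have hG1k : HasKComponentsOn (Finset.univ : Finset V) G1 k := by
      rw [components_iff hpart hG1prin.2.2.1, hG1prin.2.2.2]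
      exact hG'k2
    have hle : totW w AF ≤ totW w G1 :=
      hminAll G1 hG1prin.1 hG1prin.2.1 hG1k hG1prin.2.2.1
    have hfstG' : ∀ Q ∈ G', ∀ Q' ∈ G', Prod.fst Q = Prod.fst Q' → Q = Q' := by
      rintro ⟨X, Y⟩ h ⟨X', Y'⟩ h' (he : X = X')
      subst he
      exact Prod.ext rfl (hG'for2.2.1 X Y Y' h h')
    have htsubG' : G'.image Prod.fst ⊆ P := by
      intro X hX
      obtain ⟨Q, hQ, rfl⟩ := Finset.mem_image.1 hX
      exact (hG'for2.1 Q hQ).1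
    have h2 : (∑ Q ∈ G', (lamXY w AΨ Q.1 Q.2 - lamB w AΨ Q.1)) =
        totW w G1 - ∑ Y ∈ P, lamB w AΨ Y := by
      rw [sum_rearrange (w := w) (AΨ := AΨ) hfstG' htsubG', ← hG1w]
    rw [part1, h2]
    linarith
  · -- backward direction
    intro hminSplit G hGsub hGfor hGk hGdiv
    set G'' := splitArcsOf G P with hG''
    have hsub2 : ↑G'' ⊆ psiSplitArcs AΨ P :=
      split_sub_psi hpart hGsub hGfor.2.1 hGdiv
    have hfor2 : IsEnteringForestOn P G'' := by
      refine ⟨?_, ?_, split_acyclic hpart hGdiv hGfor.2.2 hGfor.2.1⟩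
      · rintro ⟨X, Y⟩ hp
        have := mem_splitArcsOf.1 hp
        exact ⟨this.1, this.2.1⟩
      · intro X Y Y' h h'
        exact split_fst_inj hpart hGfor.2.1 hGdiv h h'
    have hk2 : HasKComponentsOn P G'' k := (components_iff hpart hGdiv).1 hGk
    have hle := hminSplit G'' hsub2 hfor2 hk2
    have hfstG'' : ∀ Q ∈ G'', ∀ Q' ∈ G'', Prod.fst Q = Prod.fst Q' → Q = Q' := by
      rintro ⟨X, Y⟩ h ⟨X', Y'⟩ h' (he : X = X')
      subst he
      exact Prod.ext rfl (hfor2.2.1 X Y Y' h h')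
    have htsubG'' : G''.image Prod.fst ⊆ P := by
      intro X hX
      obtain ⟨Q, hQ, rfl⟩ := Finset.mem_image.1 hX
      exact (hfor2.1 Q hQ).1
    have h2 : (∑ Q ∈ G'', (lamXY w AΨ Q.1 Q.2 - lamB w AΨ Q.1)) =
        (∑ Q ∈ G'', lamXY w AΨ Q.1 Q.2 +
          ∑ X ∈ P \ G''.image Prod.fst, lamB w AΨ X) - ∑ Y ∈ P, lamB w AΨ Y :=
      sum_rearrange (w := w) (AΨ := AΨ) hfstG'' htsubG''
    have h3 : ∑ Q ∈ G'', lamXY w AΨ Q.1 Q.2 +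
        ∑ X ∈ P \ G''.image Prod.fst, lamB w AΨ X ≤ totW w G :=
      principal_lower (w := w) hpart hGsub hGfor hGdiv
    rw [part1] at hle
    rw [h2] at hle
    linarith
end
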